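/- arXiv:2401.15831 — 4 statements merged into one kernel-verified Lean document; each statement's English description precedes it below -/
import Mathlib

section
/- Let N ≥ 2, let μ₁,…,μ_N > 0 be constants, let P₁,…,P_N ∈ ℕ, and let β ≥ 0. Then there exists a constant ε₀ = ε₀(μ₁,…,μ_N; P₁,…,P_N; β) > 0 with the following property: whenever real constants β_{ij} = β_{ji} (for i ≠ j, i,j = 1,…,N) satisfy β_{ij} ∈ [−ε₀, β], and u₁,…,u_N : ℝ³ → ℝ are radial functions of class C² such that for every j one has |u_j(x)| ≤ 1 for all x ∈ ℝ³, u_j is either identically zero or changes sign at most P_j times, and −Δu_j = μ_j u_j³ + Σ_{i≠j} β_{ij} u_i² u_j holds pointwise in ℝ³, then u_j ≡ 0 for every j = 1,…,N. -/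
open scoped BigOperators

/-- The Laplacian on `ℝ³`, written as the sum of second partial derivatives. -/
noncomputable def lap3 (u : EuclideanSpace ℝ (Fin 3) → ℝ) (x : EuclideanSpace ℝ (Fin 3)) : ℝ :=
  ∑ i : Fin 3, fderiv ℝ (fun y => fderiv ℝ u y (EuclideanSpace.single i 1)) x
    (EuclideanSpace.single i 1)

/-- A function on `ℝ³` is radial if it only depends on the norm. -/
def IsRadial (u : EuclideanSpace ℝ (Fin 3) → ℝ) : Prop :=
  ∃ v : ℝ → ℝ, ∀ x, u x = v ‖x‖

/-- There are `k + 1` points of `S`, with positive and strictly increasing norms, on which `u`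
successively changes sign `k` times. -/
def SignChangeWitnessOn (u : EuclideanSpace ℝ (Fin 3) → ℝ) (S : Set (EuclideanSpace ℝ (Fin 3))) (k : ℕ) : Prop :=
  ∃ x : Fin (k + 1) → EuclideanSpace ℝ (Fin 3),
    (∀ i, x i ∈ S) ∧ (∀ i, 0 < ‖x i‖) ∧
    (∀ i j : Fin (k + 1), i < j → ‖x i‖ < ‖x j‖) ∧
    (∀ i : Fin k, u (x i.castSucc) * u (x i.succ) < 0)

/-- A radial function changes sign at most `P` times on `S`. -/
def ChangesSignAtMostOn (u : EuclideanSpace ℝ (Fin 3) → ℝ) (S : Set (EuclideanSpace ℝ (Fin 3))) (P : ℕ) : Prop :=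
  ¬ SignChangeWitnessOn u S (P + 1)

/-- A radial function changes sign exactly `P` times on `S`. -/
def ChangesSignExactlyOn (u : EuclideanSpace ℝ (Fin 3) → ℝ) (S : Set (EuclideanSpace ℝ (Fin 3))) (P : ℕ) : Prop :=
  SignChangeWitnessOn u S P ∧ ¬ SignChangeWitnessOn u S (P + 1)

/-!
Write `V_j r = u_j (r e₀)`; for `r > 0` it solves `V'' + (2/r) V' = -(μ_j V_j³ + ∑ β_ij V_i² V_j)`.
Finitely many sign changes give each `V_j` a constant sign `s_j` beyond some `R`. For
`W r = r ∑ s_j V_j r` the couplings `β_ij ≥ -ε₀`, with `ε₀ = min μ / (4N)`, are absorbed by the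
diagonal terms (`a²b ≤ a³ + b³`), and Jensen's inequality gives `r² W'' ≤ -k W³` on `(R, ∞)` with
`k > 0`. A nonnegative solution of this inequality is concave, hence nondecreasing, and if it were
positive somewhere then `W⁻² + (k/2) log r` would be nonincreasing there, which is absurd. So every
`V_j` vanishes beyond `R`, and backward uniqueness for the linear equation satisfied by `V_j`, whose
coefficients are bounded because `|u_j| ≤ 1`, forces `V_j = 0` on `(0, ∞)`: the energy
`V_j² + V_j'²` can grow at most exponentially as `r` decreases.
-/

open Filter Finset

noncomputable def radialProfile (u : EuclideanSpace ℝ (Fin 3) → ℝ) (r : ℝ) : ℝ :=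
  u (r • EuclideanSpace.single 0 1)

lemma norm_smul_single {ι : Type*} [Fintype ι] [DecidableEq ι] (r : ℝ) (i : ι) :
    ‖r • EuclideanSpace.single i (1 : ℝ)‖ = |r| := by
  rw [norm_smul, PiLp.norm_single, norm_one, mul_one, Real.norm_eq_abs]

lemma IsRadial.eq_radialProfile_norm {u : EuclideanSpace ℝ (Fin 3) → ℝ} (hu : IsRadial u)
    (x : EuclideanSpace ℝ (Fin 3)) : u x = radialProfile u ‖x‖ := by
  obtain ⟨v, hv⟩ := hu
  rw [radialProfile, hv, hv, norm_smul_single, abs_norm]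

lemma IsRadial.eq_zero_of_radialProfile_eq_zero {u : EuclideanSpace ℝ (Fin 3) → ℝ}
    (hrad : IsRadial u) (hu : Continuous u) (h : ∀ r > 0, radialProfile u r = 0)
    (x : EuclideanSpace ℝ (Fin 3)) :
    u x = 0 :=
  congrFun (hu.ext_on (dense_compl_singleton 0) continuous_const fun x hx => by
    rw [hrad.eq_radialProfile_norm]
    exact h _ (norm_pos_iff.2 hx)) x

lemma ContDiff.radialProfile {u : EuclideanSpace ℝ (Fin 3) → ℝ} {n : WithTop ℕ∞}
    (hu : ContDiff ℝ n u) : ContDiff ℝ n (radialProfile u) :=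
  hu.comp (contDiff_id.smul contDiff_const)

lemma fderiv_fderiv_apply_eq_deriv_deriv {E : Type*} [NormedAddCommGroup E] [NormedSpace ℝ E]
    {u : E → ℝ} (hu : ContDiff ℝ 2 u) (x w : E) :
    fderiv ℝ (fun y => fderiv ℝ u y w) x w = deriv (deriv fun t : ℝ => u (x + t • w)) 0 := by
  have hline : ∀ t : ℝ, HasDerivAt (fun t : ℝ => x + t • w) w t := fun t => by
    simpa using ((hasDerivAt_id t).smul_const w).const_add x
  have hDu : Differentiable ℝ (fderiv ℝ u) :=
    (hu.fderiv_right (m := 1) le_rfl).differentiable one_ne_zero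
  have hderiv : deriv (fun t : ℝ => u (x + t • w)) = fun t => fderiv ℝ u (x + t • w) w :=
    funext fun t =>
      (((hu.differentiable two_ne_zero) _).hasFDerivAt.comp_hasDerivAt t (hline t)).deriv
  have hD2 : HasDerivAt (fun t : ℝ => fderiv ℝ u (x + t • w)) (fderiv ℝ (fderiv ℝ u) x w) 0 := by
    have h := (hDu (x + (0 : ℝ) • w)).hasFDerivAt.comp_hasDerivAt 0 (hline 0)
    rwa [zero_smul, add_zero] at h
  rw [hderiv, (hD2.clm_apply (hasDerivAt_const 0 w)).deriv,
    fderiv_clm_apply (hDu x) (differentiableAt_const w)]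
  simp

lemma norm_smul_single_add_smul_single {ι : Type*} [Fintype ι] [DecidableEq ι] {i j : ι}
    (hij : i ≠ j) (r t : ℝ) :
    ‖r • EuclideanSpace.single i (1 : ℝ) + t • EuclideanSpace.single j 1‖ = √(r ^ 2 + t ^ 2) := by
  rw [norm_add_eq_sqrt_iff_real_inner_eq_zero.2, norm_smul_single, norm_smul_single,
    ← sq, ← sq, sq_abs, sq_abs]
  simp [inner_smul_left, inner_smul_right, EuclideanSpace.inner_single_left, hij.symm]

lemma deriv_deriv_comp_sqrt_sq_add_sq {f : ℝ → ℝ} (hf : Differentiable ℝ f)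
    (hf' : Differentiable ℝ (deriv f)) {r : ℝ} (hr : 0 < r) :
    deriv (deriv fun t => f √(r ^ 2 + t ^ 2)) 0 = deriv f r / r := by
  set φ : ℝ → ℝ := fun t => √(r ^ 2 + t ^ 2)
  have hφ : ∀ t, HasDerivAt φ (t / φ t) t := fun t => by
    refine (((hasDerivAt_pow 2 t).const_add (r ^ 2)).sqrt (by positivity)).congr_deriv ?_
    simp only [φ]
    field_simp
    norm_num
  have hφ0 : φ 0 = r := by simp [φ, Real.sqrt_sq hr.le]
  have hderiv : deriv (fun t => f (φ t)) = fun t => deriv f (φ t) * (t / φ t) :=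
    funext fun t => ((hf _).hasDerivAt.comp t (hφ t)).deriv
  have h : HasDerivAt (fun t => deriv f (φ t) * (t / φ t)) _ 0 :=
    ((hf' (φ 0)).hasDerivAt.comp 0 (hφ 0)).fun_mul
    ((hasDerivAt_id' 0).fun_div (hφ 0) (by rw [hφ0]; exact hr.ne'))
  rw [hderiv, h.deriv]
  simp only [Function.comp_apply, hφ0]
  field_simp
  ring

lemma IsRadial.lap3_smul_single {u : EuclideanSpace ℝ (Fin 3) → ℝ} (hrad : IsRadial u)
    (hu : ContDiff ℝ 2 u) {r : ℝ} (hr : 0 < r) :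
    lap3 u (r • EuclideanSpace.single 0 1) =
      deriv (deriv (radialProfile u)) r + 2 * (deriv (radialProfile u) r / r) := by
  set V := radialProfile u
  have hV : ContDiff ℝ 2 V := hu.radialProfile
  have h₀ : deriv (deriv fun t : ℝ =>
      u (r • EuclideanSpace.single 0 1 + t • EuclideanSpace.single 0 1)) 0 = deriv (deriv V) r := by
    simp_rw [← add_smul]
    change deriv (deriv fun t => V (r + t)) 0 = _
    rw [funext fun t => deriv_comp_const_add (f := V) (a := r) (x := t), deriv_comp_const_add,
      add_zero]
  have hne : ∀ i : Fin 3, i ≠ 0 → deriv (deriv fun t : ℝ =>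
      u (r • EuclideanSpace.single 0 1 + t • EuclideanSpace.single i 1)) 0 = deriv V r / r := by
    intro i hi
    simp_rw [hrad.eq_radialProfile_norm, norm_smul_single_add_smul_single hi.symm]
    exact deriv_deriv_comp_sqrt_sq_add_sq (hV.differentiable two_ne_zero)
      hV.differentiable_deriv_two hr
  simp only [lap3, fderiv_fderiv_apply_eq_deriv_deriv hu, Fin.sum_univ_three, h₀,
    hne 1 (by decide), hne 2 (by decide)]
  ring

lemma exists_strictMono_mul_succ_neg {v : ℝ → ℝ} (hneg : ∃ᶠ r in atTop, v r < 0)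
    (hpos : ∃ᶠ r in atTop, 0 < v r) :
    ∃ t : ℕ → ℝ, 0 < t 0 ∧ StrictMono t ∧ ∀ n, v (t n) * v (t (n + 1)) < 0 := by
  have next : ∀ r : {r : ℝ // v r ≠ 0}, ∃ r' : {r : ℝ // v r ≠ 0}, r.1 < r' ∧ v r * v r' < 0 := by
    rintro ⟨r, hr⟩
    rcases hr.lt_or_gt with h | h
    · obtain ⟨r', hr', h'⟩ := frequently_atTop'.1 hpos r
      exact ⟨⟨r', h'.ne'⟩, hr', mul_neg_of_neg_of_pos h h'⟩
    · obtain ⟨r', hr', h'⟩ := frequently_atTop'.1 hneg r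
      exact ⟨⟨r', h'.ne⟩, hr', mul_neg_of_pos_of_neg h h'⟩
  choose f hf using next
  obtain ⟨r₀, hr₀, hv₀⟩ := frequently_atTop'.1 hpos 0
  refine ⟨fun n => (f^[n] ⟨r₀, hv₀.ne'⟩).1, hr₀, strictMono_nat_of_lt_succ fun n => ?_,
    fun n => ?_⟩
  · simpa only [Function.iterate_succ_apply'] using (hf _).1
  · simpa only [Function.iterate_succ_apply'] using (hf _).2

lemma ChangesSignAtMostOn.exists_sign_eventually_nonneg {u : EuclideanSpace ℝ (Fin 3) → ℝ}
    {P : ℕ} (h : ChangesSignAtMostOn u Set.univ P) :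
    ∃ s : ℝ, (s = 1 ∨ s = -1) ∧ ∀ᶠ r in atTop, 0 ≤ s * radialProfile u r := by
  by_cases hp : ∀ᶠ r in atTop, 0 ≤ radialProfile u r
  · exact ⟨1, Or.inl rfl, by simpa using hp⟩
  by_cases hn : ∀ᶠ r in atTop, radialProfile u r ≤ 0
  · exact ⟨-1, Or.inr rfl, hn.mono fun r hr => by linarith⟩
  simp only [not_eventually, not_le] at hp hn
  obtain ⟨t, ht₀, ht, halt⟩ := exists_strictMono_mul_succ_neg hp hn
  have ht_pos : ∀ n, 0 < t n := fun n => ht₀.trans_le (ht.monotone n.zero_le)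
  refine absurd ⟨fun i => t i • EuclideanSpace.single 0 1, fun _ => Set.mem_univ _, ?_, ?_, ?_⟩ h
  · simpa [norm_smul_single, abs_of_pos (ht_pos _)] using fun i : Fin _ => ht_pos i
  · intro i j hij
    simpa [norm_smul_single, abs_of_pos (ht_pos _)] using ht hij
  · exact fun i => halt i

lemma eq_zero_of_abs_deriv_deriv_le {f : ℝ → ℝ} (hf : Differentiable ℝ f)
    (hf' : Differentiable ℝ (deriv f)) {a b C : ℝ} (hab : a ≤ b) (hC : 0 ≤ C)
    (hode : ∀ r ∈ Set.Icc a b, |deriv (deriv f) r| ≤ C * (|f r| + |deriv f r|))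
    (hb : f b = 0) (hb' : deriv f b = 0) : f a = 0 := by
  set K := 1 + 3 * C
  set E : ℝ → ℝ := fun r => f r ^ 2 + deriv f r ^ 2
  have hE : ∀ r, HasDerivAt E (2 * f r * deriv f r + 2 * deriv f r * deriv (deriv f) r) r :=
    fun r => (((hf r).hasDerivAt.fun_pow 2).fun_add ((hf' r).hasDerivAt.fun_pow 2)).congr_deriv
      (by push_cast; ring)
  have hE_ge : ∀ r ∈ Set.Icc a b,
      -(K * E r) ≤ 2 * f r * deriv f r + 2 * deriv f r * deriv (deriv f) r := by
    intro r hr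
    have hz := hode r hr
    have hyz : |deriv f r| * |deriv (deriv f) r| ≤ |deriv f r| * (C * (|f r| + |deriv f r|)) :=
      mul_le_mul_of_nonneg_left hz (abs_nonneg _)
    nlinarith [neg_abs_le (deriv f r * deriv (deriv f) r), abs_mul (deriv f r) (deriv (deriv f) r),
      sq_abs (f r), sq_abs (deriv f r), sq_nonneg (f r + deriv f r),
      mul_nonneg hC (sq_nonneg (|f r| - |deriv f r|)), mul_nonneg hC (sq_nonneg (f r))]
  have hmono : MonotoneOn (fun r => Real.exp (K * r) * E r) (Set.Icc a b) := by
    have hG : ∀ r, HasDerivAt (fun r => Real.exp (K * r) * E r) (Real.exp (K * r) *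
        (K * E r + (2 * f r * deriv f r + 2 * deriv f r * deriv (deriv f) r))) r := fun r =>
      ((((hasDerivAt_id' r).const_mul K).exp).fun_mul (hE r)).congr_deriv (by ring)
    refine monotoneOn_of_hasDerivWithinAt_nonneg (convex_Icc a b)
      (fun r _ => (hG r).continuousAt.continuousWithinAt) (fun r _ => (hG r).hasDerivWithinAt)
      fun r hr => ?_
    rw [interior_Icc] at hr
    have := hE_ge r (Set.Ioo_subset_Icc_self hr)
    exact mul_nonneg (Real.exp_pos _).le (by linarith)
  have hEa : E a ≤ 0 := by
    have h := hmono (Set.left_mem_Icc.2 hab) (Set.right_mem_Icc.2 hab) hab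
    simp only [E, hb, hb'] at h
    exact nonpos_of_mul_nonpos_right (by simpa using h) (Real.exp_pos _)
  nlinarith [sq_nonneg (f a), sq_nonneg (deriv f a)]

section Liouville

variable {W : ℝ → ℝ} {R : ℝ}

lemma deriv_nonneg_of_nonneg_of_deriv_deriv_nonpos (hW : Differentiable ℝ W)
    (hW' : Differentiable ℝ (deriv W)) (hpos : ∀ r > R, 0 ≤ W r)
    (hconc : ∀ r > R, deriv (deriv W) r ≤ 0) {p : ℝ} (hp : R < p) : 0 ≤ deriv W p := by
  by_contra! hneg
  -- `W` lies below its tangent line at `p`, which becomes negative.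
  have htangent : ∀ r ≥ p, W r ≤ W p + deriv W p * (r - p) := by
    have hanti : AntitoneOn (fun r => W r - deriv W p * (r - p)) (Set.Ici p) := by
      have hg : ∀ r, HasDerivAt (fun r => W r - deriv W p * (r - p)) (deriv W r - deriv W p) r :=
        fun r => ((hW r).hasDerivAt.sub (((hasDerivAt_id' r).sub_const p).const_mul _)).congr_deriv
          (by ring)
      refine antitoneOn_of_hasDerivWithinAt_nonpos (convex_Ici p)
        (fun r _ => (hg r).continuousAt.continuousWithinAt) (fun r _ => (hg r).hasDerivWithinAt)
        fun r hr => ?_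
      rw [interior_Ici] at hr
      have : deriv W r ≤ deriv W p := antitoneOn_of_deriv_nonpos (convex_Ioi R)
        hW'.continuous.continuousOn hW'.differentiableOn (fun x hx => hconc x (by simpa using hx))
        hp (hp.trans hr) (le_of_lt hr)
      linarith
    intro r hr
    have := hanti (Set.mem_Ici.2 le_rfl) hr hr
    simp only [sub_self, mul_zero, sub_zero] at this
    linarith
  set d := (W p + 1) / -deriv W p
  have hd : deriv W p * d = -(W p + 1) := by
    simp only [d]
    field_simp [hneg.ne]
  have hr : p ≤ p + d := le_add_of_nonneg_right (div_nonneg (by linarith [hpos p hp]) (by linarith))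
  have := htangent _ hr
  rw [add_sub_cancel_left, hd] at this
  linarith [hpos _ (hp.trans_le hr)]

lemma monotoneOn_Ioi_of_deriv_nonneg (hW : Differentiable ℝ W) (hd : ∀ r > R, 0 ≤ deriv W r) :
    MonotoneOn W (Set.Ioi R) :=
  monotoneOn_of_deriv_nonneg (convex_Ioi R) hW.continuous.continuousOn hW.differentiableOn
    fun r hr => hd r (by simpa using hr)

lemma mul_cube_le_four_mul_deriv (hW : Differentiable ℝ W) (hW' : Differentiable ℝ (deriv W))
    {k : ℝ} (hk : 0 ≤ k) (hR : 0 ≤ R) (hpos : ∀ r > R, 0 ≤ W r) (hd : ∀ r > R, 0 ≤ deriv W r)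
    (hconc : ∀ r > R, deriv (deriv W) r ≤ 0)
    (hineq : ∀ r > R, r ^ 2 * deriv (deriv W) r ≤ -k * W r ^ 3) {r : ℝ} (hr : R < r) : k * W r ^ 3 ≤ 4 * r * deriv W r := by
  have hr0 : 0 < r := hR.trans_lt hr
  obtain ⟨ξ, hξ, hslope⟩ := exists_deriv_eq_slope (deriv W) (by linarith : r < 2 * r)
    hW'.continuous.continuousOn hW'.differentiableOn
  have hξR : R < ξ := hr.trans hξ.1
  have hWξ : W r ^ 3 ≤ W ξ ^ 3 := pow_le_pow_left₀ (hpos r hr)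
    (monotoneOn_Ioi_of_deriv_nonneg hW hd hr hξR hξ.1.le) 3
  have hslope' : r * deriv (deriv W) ξ = deriv W (2 * r) - deriv W r := by
    rw [hslope]
    field_simp
    ring
  have hξsq : 4 * r ^ 2 * deriv (deriv W) ξ ≤ ξ ^ 2 * deriv (deriv W) ξ :=
    mul_le_mul_of_nonpos_right (by nlinarith [hξ.1, hξ.2]) (hconc ξ hξR)
  nlinarith [hineq ξ hξR, hd (2 * r) (by linarith), mul_le_mul_of_nonneg_left hWξ hk]

lemma eq_zero_of_sq_mul_deriv_deriv_le_neg_mul_cube (hW : Differentiable ℝ W)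
    (hW' : Differentiable ℝ (deriv W)) {k : ℝ} (hk : 0 < k) (hR : 0 ≤ R)
    (hpos : ∀ r > R, 0 ≤ W r) (hineq : ∀ r > R, r ^ 2 * deriv (deriv W) r ≤ -k * W r ^ 3)
    {r : ℝ} (hr : R < r) : W r = 0 := by
  have hconc : ∀ r > R, deriv (deriv W) r ≤ 0 := fun r hr =>
    nonpos_of_mul_nonpos_right ((hineq r hr).trans (by
      nlinarith [mul_nonneg hk.le (pow_nonneg (hpos r hr) 3)])) (pow_pos (hR.trans_lt hr) 2)
  have hd := fun p (hp : p > R) => deriv_nonneg_of_nonneg_of_deriv_deriv_nonpos hW hW' hpos hconc hp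
  have hmono := monotoneOn_Ioi_of_deriv_nonneg hW hd
  by_contra hne
  have hWpos : ∀ ρ ≥ r, 0 < W ρ := fun ρ hρ =>
    ((hpos r hr).lt_of_ne' hne).trans_le (hmono hr (hr.trans_le hρ) hρ)
  -- `(W ρ)⁻² + (k/2) log ρ` is antitone on `[r, ∞)`, although its second term is unbounded.
  set H : ℝ → ℝ := fun ρ => (W ρ ^ 2)⁻¹ + k / 2 * Real.log ρ
  have hH : ∀ ρ ≥ r, HasDerivAt H ((k * W ρ ^ 3 - 4 * ρ * deriv W ρ) / (2 * ρ * W ρ ^ 3)) ρ :=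
    fun ρ hρ => by
      have hρ0 : 0 < ρ := (hR.trans_lt hr).trans_le hρ
      have hWρ := (hWpos ρ hρ).ne'
      refine ((((hW ρ).hasDerivAt.fun_pow 2).fun_inv (pow_ne_zero 2 hWρ)).fun_add
        ((Real.hasDerivAt_log hρ0.ne').const_mul (k / 2))).congr_deriv ?_
      field_simp
      ring
  have hanti : AntitoneOn H (Set.Ici r) := by
    refine antitoneOn_of_hasDerivWithinAt_nonpos (convex_Ici r)
      (fun ρ hρ => (hH ρ hρ).continuousAt.continuousWithinAt)
      (fun ρ hρ => (hH ρ (interior_subset hρ)).hasDerivWithinAt) fun ρ hρ => ?_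
    rw [interior_Ici] at hρ
    have hρ0 : 0 < ρ := (hR.trans_lt hr).trans hρ
    refine div_nonpos_of_nonpos_of_nonneg ?_ (by positivity [hWpos ρ hρ.le])
    linarith [mul_cube_le_four_mul_deriv hW hW' hk.le hR hpos hd hconc hineq (hr.trans hρ)]
  obtain ⟨ρ, hρr, hρ⟩ := ((eventually_ge_atTop r).and
    ((Real.tendsto_log_atTop.const_mul_atTop (half_pos hk)).eventually_gt_atTop (H r))).exists
  have := hanti (Set.mem_Ici.2 le_rfl) hρr hρr
  simp only [H] at this hρ
  linarith [inv_nonneg.2 (sq_nonneg (W ρ))]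

end Liouville

lemma deriv_deriv_id_mul {f : ℝ → ℝ} (hf : Differentiable ℝ f) (hf' : Differentiable ℝ (deriv f))
    (r : ℝ) : deriv (deriv fun r => r * f r) r = 2 * deriv f r + r * deriv (deriv f) r := by
  have h : deriv (fun r => r * f r) = fun r => f r + r * deriv f r :=
    funext fun r => (((hasDerivAt_id' r).fun_mul (hf r).hasDerivAt).congr_deriv (by ring)).deriv
  rw [h, (((hf r).hasDerivAt.fun_add ((hasDerivAt_id' r).fun_mul (hf' r).hasDerivAt))).deriv]
  ring

lemma sq_mul_le_cube_add_cube {a b : ℝ} (ha : 0 ≤ a) (hb : 0 ≤ b) : a ^ 2 * b ≤ a ^ 3 + b ^ 3 := by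
  nlinarith [mul_nonneg (add_nonneg ha hb) (sq_nonneg (a - b)), mul_nonneg ha (sq_nonneg b)]

lemma neg_mul_sum_cube_le_sum_sum_erase {N : ℕ} {B : Fin N → Fin N → ℝ} {ε : ℝ} (hε : 0 ≤ ε)
    (hB : ∀ i j, i ≠ j → -ε ≤ B i j) {a : Fin N → ℝ} (ha : ∀ j, 0 ≤ a j) :
    -(2 * N * ε * ∑ j, a j ^ 3) ≤ ∑ j, ∑ i ∈ univ.erase j, B i j * a i ^ 2 * a j := by
  have hcube : ∀ i j, 0 ≤ a i ^ 3 + a j ^ 3 := fun i j => by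
    have := ha i; have := ha j; positivity
  calc -(2 * N * ε * ∑ j, a j ^ 3) = -ε * ∑ j, ∑ i, (a i ^ 3 + a j ^ 3) := by
        simp only [sum_add_distrib, sum_const, card_univ, Fintype.card_fin, nsmul_eq_mul,
          ← mul_sum]
        ring
    _ ≤ -ε * ∑ j, ∑ i ∈ univ.erase j, (a i ^ 3 + a j ^ 3) :=
        mul_le_mul_of_nonpos_left (sum_le_sum fun j _ => sum_le_sum_of_subset_of_nonneg
          (erase_subset _ _) fun i _ _ => hcube i j) (by linarith)
    _ ≤ ∑ j, ∑ i ∈ univ.erase j, B i j * a i ^ 2 * a j := by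
        rw [mul_sum]
        refine sum_le_sum fun j _ => ?_
        rw [mul_sum]
        refine sum_le_sum fun i hi => ?_
        have hB := hB i j (ne_of_mem_erase hi)
        have h := sq_mul_le_cube_add_cube (ha i) (ha j)
        have h0 : 0 ≤ a i ^ 2 * a j := mul_nonneg (sq_nonneg _) (ha j)
        nlinarith

section RadialSystem

variable {N : ℕ} {μ : Fin N → ℝ} {B : Fin N → Fin N → ℝ} {V : Fin N → ℝ → ℝ}

def RadialSystem (μ : Fin N → ℝ) (B : Fin N → Fin N → ℝ) (V : Fin N → ℝ → ℝ) : Prop :=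
  ∀ j, ∀ r > 0, deriv (deriv (V j)) r + 2 * (deriv (V j) r / r) =
    -(μ j * V j r ^ 3 + ∑ i ∈ univ.erase j, B i j * V i r ^ 2 * V j r)

lemma RadialSystem.signed_sum (hsys : RadialSystem μ B V) (hV : ∀ j, ContDiff ℝ 2 (V j))
    {s : Fin N → ℝ} (hs : ∀ j, s j = 1 ∨ s j = -1) {r : ℝ} (hr : 0 < r) :
    deriv (deriv fun r => ∑ j, s j * V j r) r + 2 * (deriv (fun r => ∑ j, s j * V j r) r / r) =
      -∑ j, (μ j * (s j * V j r) ^ 3 +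
        ∑ i ∈ univ.erase j, B i j * (s i * V i r) ^ 2 * (s j * V j r)) := by
  have hd : ∀ r, HasDerivAt (fun r => ∑ j, s j * V j r) (∑ j, s j * deriv (V j) r) r :=
    fun r => HasDerivAt.fun_sum fun j _ =>
      ((hV j).differentiable two_ne_zero r).hasDerivAt.const_mul (s j)
  have hd' : ∀ r, HasDerivAt (fun r => ∑ j, s j * deriv (V j) r)
      (∑ j, s j * deriv (deriv (V j)) r) r :=
    fun r => HasDerivAt.fun_sum fun j _ =>
      ((hV j).differentiable_deriv_two r).hasDerivAt.const_mul (s j)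
  rw [funext fun r => (hd r).deriv, (hd' r).deriv, sum_div, mul_sum, ← sum_add_distrib,
    ← sum_neg_distrib]
  refine sum_congr rfl fun j _ => ?_
  have hsq : ∀ i, s i ^ 2 = 1 := fun i => by rcases hs i with h | h <;> simp [h]
  have hj := hsys j r hr
  have hterm : ∀ i, B i j * (s i * V i r) ^ 2 * (s j * V j r) = s j * (B i j * V i r ^ 2 * V j r) :=
    fun i => by rw [mul_pow, hsq]; ring
  have hcube : (s j * V j r) ^ 3 = s j * V j r ^ 3 := by rw [mul_pow, pow_succ, hsq, one_mul]
  simp only [hterm, hcube, ← mul_sum]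
  calc _ = s j * (deriv (deriv (V j)) r + 2 * (deriv (V j) r / r)) := by ring
    _ = _ := by rw [hj]; ring

lemma RadialSystem.sq_mul_deriv_deriv_le (hsys : RadialSystem μ B V)
    (hV : ∀ j, ContDiff ℝ 2 (V j)) {ε : ℝ} (hε : 0 ≤ ε) (hμ : ∀ j, 4 * N * ε ≤ μ j)
    (hB : ∀ i j, i ≠ j → -ε ≤ B i j) {s : Fin N → ℝ} (hs : ∀ j, s j = 1 ∨ s j = -1) {r : ℝ}
    (hr : 0 < r) (ha : ∀ j, 0 ≤ s j * V j r) :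
    r ^ 2 * deriv (deriv fun r => r * ∑ j, s j * V j r) r ≤
      -(2 * ε / N) * (r * ∑ j, s j * V j r) ^ 3 := by
  set A := fun r => ∑ j, s j * V j r
  have hA : ContDiff ℝ 2 A := ContDiff.sum fun j _ => contDiff_const.mul (hV j)
  rw [deriv_deriv_id_mul (hA.differentiable two_ne_zero) hA.differentiable_deriv_two]
  set S := ∑ j, (s j * V j r) ^ 3
  have hT : 2 * N * ε * S ≤ ∑ j, (μ j * (s j * V j r) ^ 3 +
      ∑ i ∈ univ.erase j, B i j * (s i * V i r) ^ 2 * (s j * V j r)) := by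
    have hμS : ∑ j, 4 * N * ε * (s j * V j r) ^ 3 ≤ ∑ j, μ j * (s j * V j r) ^ 3 :=
      sum_le_sum fun j _ => mul_le_mul_of_nonneg_right (hμ j) (pow_nonneg (ha j) 3)
    rw [← mul_sum] at hμS
    rw [sum_add_distrib]
    linarith [neg_mul_sum_cube_le_sum_sum_erase hε hB ha]
  have hjensen : A r ^ 3 ≤ (N : ℝ) ^ 2 * S := by
    simpa using pow_sum_le_card_mul_sum_pow (s := univ) (fun j _ => ha j) 2
  have hAS : 2 * ε / N * A r ^ 3 ≤ 2 * N * ε * S := by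
    obtain rfl | hN := N.eq_zero_or_pos
    · simp
    calc 2 * ε / N * A r ^ 3 ≤ 2 * ε / N * (N ^ 2 * S) := by gcongr
      _ = 2 * N * ε * S := by field_simp
  have hode := hsys.signed_sum hV hs hr
  calc r ^ 2 * (2 * deriv A r + r * deriv (deriv A) r)
      = r ^ 3 * (deriv (deriv A) r + 2 * (deriv A r / r)) := by field_simp; ring
    _ ≤ r ^ 3 * -(2 * ε / N * A r ^ 3) := by
      rw [hode]
      exact mul_le_mul_of_nonneg_left (by linarith) (by positivity)
    _ = -(2 * ε / N) * (r * A r) ^ 3 := by ring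

lemma RadialSystem.eventually_eq_zero (hsys : RadialSystem μ B V)
    (hV : ∀ j, ContDiff ℝ 2 (V j)) {ε : ℝ} (hε : 0 < ε) (hμ : ∀ j, 4 * N * ε ≤ μ j)
    (hB : ∀ i j, i ≠ j → -ε ≤ B i j) {s : Fin N → ℝ} (hs : ∀ j, s j = 1 ∨ s j = -1)
    (hsV : ∀ j, ∀ᶠ r in atTop, 0 ≤ s j * V j r) (j : Fin N) : ∀ᶠ r in atTop, V j r = 0 := by
  obtain ⟨R, hR⟩ := eventually_atTop.1 ((eventually_all.2 hsV).and (eventually_ge_atTop 0))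
  have hR0 : 0 ≤ R := (hR R le_rfl).2
  set A := fun r => ∑ j, s j * V j r
  have hW : ContDiff ℝ 2 fun r => r * A r :=
    contDiff_id.mul (ContDiff.sum fun j _ => contDiff_const.mul (hV j))
  have hA : ∀ r > R, A r = 0 := fun r hr => by
    have h := eq_zero_of_sq_mul_deriv_deriv_le_neg_mul_cube (hW.differentiable two_ne_zero)
      hW.differentiable_deriv_two (k := 2 * ε / N) (by have := j.pos; positivity) hR0
      (fun r hr => mul_nonneg (hR0.trans hr.le) (sum_nonneg fun i _ => (hR r hr.le).1 i))
      (fun r hr => hsys.sq_mul_deriv_deriv_le hV hε.le hμ hB hs (hR0.trans_lt hr)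
        (hR r hr.le).1) hr
    exact (mul_eq_zero.1 h).resolve_left (hR0.trans_lt hr).ne'
  filter_upwards [eventually_gt_atTop R] with r hr
  have h := (sum_eq_zero_iff_of_nonneg fun i _ => (hR r hr.le).1 i).1 (hA r hr) j (mem_univ j)
  exact (mul_eq_zero.1 h).resolve_left (by rcases hs j with h | h <;> norm_num [h])

lemma RadialSystem.eq_zero_of_eventually_eq_zero (hsys : RadialSystem μ B V)
    (hV : ∀ j, ContDiff ℝ 2 (V j)) (hbound : ∀ j r, |V j r| ≤ 1)
    (hzero : ∀ j, ∀ᶠ r in atTop, V j r = 0) (j : Fin N) {r : ℝ} (hr : 0 < r) : V j r = 0 := by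
  obtain ⟨R, hR⟩ := eventually_atTop.1 (hzero j)
  set b := max r R + 1
  have hRb : R < b := by linarith [le_max_right r R]
  have hVb' : deriv (V j) b = 0 := by
    have : V j =ᶠ[nhds b] fun _ => 0 := eventually_of_mem (Ioi_mem_nhds hRb) fun x hx => hR x hx.le
    rw [this.deriv_eq, deriv_const]
  set Q := |μ j| + ∑ i ∈ univ.erase j, |B i j|
  have hQ : 0 ≤ Q := by positivity
  have hnonlin : ∀ t, |μ j * V j t ^ 3 + ∑ i ∈ univ.erase j, B i j * V i t ^ 2 * V j t| ≤
      Q * |V j t| := fun t => by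
    have hsq : ∀ i, |V i t| ^ 2 ≤ 1 := fun i => pow_le_one₀ (abs_nonneg _) (hbound i t)
    rw [add_mul, sum_mul]
    refine (abs_add_le _ _).trans (add_le_add ?_ ((abs_sum_le_sum_abs _ _).trans
      (sum_le_sum fun i _ => ?_)))
    · rw [abs_mul, abs_pow, pow_succ]
      exact mul_le_mul_of_nonneg_left (mul_le_of_le_one_left (abs_nonneg _) (hsq j))
        (abs_nonneg _)
    · rw [abs_mul, abs_mul, abs_pow, mul_assoc]
      exact mul_le_mul_of_nonneg_left (mul_le_of_le_one_left (abs_nonneg _) (hsq i))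
        (abs_nonneg _)
  refine eq_zero_of_abs_deriv_deriv_le ((hV j).differentiable two_ne_zero)
    (hV j).differentiable_deriv_two (by linarith [le_max_left r R])
    (C := 2 / r + Q) (by positivity) (fun t ht => ?_) (hR b hRb.le) hVb'
  have ht0 : 0 < t := hr.trans_le ht.1
  have hcoef : 2 / t ≤ 2 / r := div_le_div_of_nonneg_left zero_le_two hr ht.1
  have hode : deriv (deriv (V j)) t = -(2 / t * deriv (V j) t) -
      (μ j * V j t ^ 3 + ∑ i ∈ univ.erase j, B i j * V i t ^ 2 * V j t) := by
    linear_combination hsys j t ht0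
  calc |deriv (deriv (V j)) t| ≤ 2 / t * |deriv (V j) t| + Q * |V j t| := by
        rw [hode]
        refine (abs_sub _ _).trans (add_le_add ?_ (hnonlin t))
        rw [abs_neg, abs_mul, abs_of_pos (by positivity : 0 < 2 / t)]
    _ ≤ (2 / r + Q) * (|V j t| + |deriv (V j) t|) := by
        nlinarith [mul_le_mul_of_nonneg_right hcoef (abs_nonneg (deriv (V j) t)),
          abs_nonneg (V j t), abs_nonneg (deriv (V j) t), (by positivity : 0 ≤ 2 / r)]

end RadialSystem

theorem liouville_R3_general (N : ℕ) (hN : 2 ≤ N) (μ : Fin N → ℝ) (hμ : ∀ j, 0 < μ j)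
    (P : Fin N → ℕ) (β : ℝ) :
    ∃ ε₀ : ℝ, 0 < ε₀ ∧
      ∀ B : Fin N → Fin N → ℝ,
        (∀ i j, i ≠ j → B i j = B j i) →
        (∀ i j, i ≠ j → -ε₀ ≤ B i j ∧ B i j ≤ β) →
        ∀ u : Fin N → EuclideanSpace ℝ (Fin 3) → ℝ,
          (∀ j, IsRadial (u j)) →
          (∀ j, ContDiff ℝ 2 (u j)) →
          (∀ j x, |u j x| ≤ 1) →
          (∀ j, (∀ x, u j x = 0) ∨ ChangesSignAtMostOn (u j) Set.univ (P j)) →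
          (∀ j x, -lap3 (u j) x =
              μ j * u j x ^ 3 + ∑ i ∈ Finset.univ.erase j, B i j * u i x ^ 2 * u j x) →
          ∀ j x, u j x = 0 := by
  have : NeZero N := ⟨by omega⟩
  obtain ⟨j₀, hj₀⟩ := Finite.exists_min μ
  refine ⟨μ j₀ / (4 * N), by have := hμ j₀; positivity, ?_⟩
  intro B _ hB u hrad hreg hbound hsign hpde
  have hV : ∀ j, ContDiff ℝ 2 (radialProfile (u j)) := fun j => (hreg j).radialProfile
  have hsys : RadialSystem μ B fun j => radialProfile (u j) := fun j r hr => by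
    rw [← (hrad j).lap3_smul_single (hreg j) hr]
    exact neg_eq_iff_eq_neg.1 (hpde j _)
  have hsigns : ∀ j, ∃ s : ℝ, (s = 1 ∨ s = -1) ∧ ∀ᶠ r in atTop, 0 ≤ s * radialProfile (u j) r :=
    fun j => (hsign j).elim (fun h => ⟨1, Or.inl rfl, by simp [radialProfile, h]⟩)
      ChangesSignAtMostOn.exists_sign_eventually_nonneg
  choose s hs hsV using hsigns
  have hε : ∀ j, 4 * N * (μ j₀ / (4 * N)) ≤ μ j := fun j => by
    rw [mul_div_cancel₀ _ (by positivity)]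
    exact hj₀ j
  have hzero := hsys.eq_zero_of_eventually_eq_zero hV (fun j r => hbound j _)
    (hsys.eventually_eq_zero hV (by have := hμ j₀; positivity) hε (fun i j hij => (hB i j hij).1)
      hs hsV)
  exact fun j => (hrad j).eq_zero_of_radialProfile_eq_zero (hreg j).continuous
    fun r hr => hzero j hr

theorem liouville_R3 (N : ℕ) (hN : 2 ≤ N) (μ : Fin N → ℝ) (hμ : ∀ j, 0 < μ j)
    (P : Fin N → ℕ) (β : ℝ) (hβ : 0 ≤ β) :
    ∃ ε₀ : ℝ, 0 < ε₀ ∧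
      ∀ B : Fin N → Fin N → ℝ,
        (∀ i j, i ≠ j → B i j = B j i) →
        (∀ i j, i ≠ j → -ε₀ ≤ B i j ∧ B i j ≤ β) →
        ∀ u : Fin N → EuclideanSpace ℝ (Fin 3) → ℝ,
          (∀ j, IsRadial (u j)) →
          (∀ j, ContDiff ℝ 2 (u j)) →
          (∀ j x, |u j x| ≤ 1) →
          (∀ j, (∀ x, u j x = 0) ∨ ChangesSignAtMostOn (u j) Set.univ (P j)) →
          (∀ j x, -lap3 (u j) x =
              μ j * u j x ^ 3 + ∑ i ∈ Finset.univ.erase j, B i j * u i x ^ 2 * u j x) →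
          ∀ j x, u j x = 0 :=
  liouville_R3_general N hN μ hμ P β
end

section
/- Let N ≥ 2, let μ₁,…,μ_N > 0 be constants and let P₁,…,P_N ∈ ℕ. Then there exists a constant ε₁ = ε₁(μ₁,…,μ_N; P₁,…,P_N) > 0 with the following property: whenever real constants β_{ij} = β_{ji} (for i ≠ j) satisfy |β_{ij}| < ε₁, and u₁,…,u_N : ℝ³ → ℝ are radial functions of class C² such that for every j one has |u_j(x)| ≤ 1 for all x ∈ ℝ³, u_j is either identically zero or changes sign at most P_j times, and −Δu_j = μ_j u_j³ + Σ_{i≠j} β_{ij} u_i² u_j holds pointwise in ℝ³, then u_j ≡ 0 for every j = 1,…,N. -/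
open scoped BigOperators

/-!
After the substitution `w = r v`, a radial solution satisfies `(r vⱼ)'' = -r fⱼ(v)`. Since each
`uⱼ` changes sign finitely often, there are signs `σⱼ` with `σⱼ vⱼ ≥ 0` for large `r`; for small
couplings the sign-corrected sum `w = r ∑ σⱼ vⱼ` is then a nonnegative solution of the
Emden–Fowler inequality `w'' ≤ -ε w³ / r²`. Concavity shows that such a `w` is bounded while
`w' ≳ 1 / r` makes it grow like `log r` unless it vanishes, so every `vⱼ` vanishes for large `r`.
Backward uniqueness for the linear equations `(r vⱼ)'' = -qⱼ (r vⱼ)`, with the bounded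
potentials `qⱼ` evaluated along the solution, spreads this to all `r > 0`.
-/

open Set Filter Topology Real

section MeanValue

variable {f f' : ℝ → ℝ} {s : Set ℝ} {a b C : ℝ}

lemma monotoneOn_of_hasDerivAt_nonneg (hs : Convex ℝ s) (hf : ∀ x ∈ s, HasDerivAt f (f' x) x)
    (hf' : ∀ x ∈ interior s, 0 ≤ f' x) : MonotoneOn f s :=
  monotoneOn_of_hasDerivWithinAt_nonneg hs (fun x hx => (hf x hx).continuousAt.continuousWithinAt)
    (fun x hx => (hf x (interior_subset hx)).hasDerivWithinAt) hf'

lemma antitoneOn_of_hasDerivAt_nonpos (hs : Convex ℝ s) (hf : ∀ x ∈ s, HasDerivAt f (f' x) x)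
    (hf' : ∀ x ∈ interior s, f' x ≤ 0) : AntitoneOn f s :=
  antitoneOn_of_hasDerivWithinAt_nonpos hs (fun x hx => (hf x hx).continuousAt.continuousWithinAt)
    (fun x hx => (hf x (interior_subset hx)).hasDerivWithinAt) hf'

lemma mul_sub_le_sub_of_hasDerivAt (hab : a ≤ b) (hf : ∀ x ∈ Icc a b, HasDerivAt f (f' x) x)
    (hC : ∀ x ∈ Ioo a b, C ≤ f' x) : C * (b - a) ≤ f b - f a := by
  have hmono : MonotoneOn (fun x => f x - C * x) (Icc a b) :=
    monotoneOn_of_hasDerivAt_nonneg (f' := fun x => f' x - C) (convex_Icc a b)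
      (fun x hx => ((hf x hx).sub ((hasDerivAt_id x).const_mul C)).congr_deriv (by simp))
      (fun x hx => sub_nonneg.2 (hC x (by rwa [interior_Icc] at hx)))
  have := hmono (left_mem_Icc.2 hab) (right_mem_Icc.2 hab) hab
  linarith

lemma sub_le_mul_sub_of_hasDerivAt (hab : a ≤ b) (hf : ∀ x ∈ Icc a b, HasDerivAt f (f' x) x)
    (hC : ∀ x ∈ Ioo a b, f' x ≤ C) : f b - f a ≤ C * (b - a) := by
  have := mul_sub_le_sub_of_hasDerivAt (f := fun x => -f x) (C := -C) hab
    (fun x hx => (hf x hx).neg) (fun x hx => neg_le_neg (hC x hx))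
  linarith

end MeanValue

section EmdenFowler

variable {w w' w'' : ℝ → ℝ} {R c : ℝ}

lemma deriv_nonneg_of_antitoneOn_of_nonneg (hw : ∀ r ∈ Ici R, HasDerivAt w (w' r) r)
    (hanti : AntitoneOn w' (Ici R)) (hpos : ∀ r ∈ Ici R, 0 ≤ w r) : ∀ r ∈ Ici R, 0 ≤ w' r := by
  intro r hr
  by_contra! hneg
  set t := r + (w r + 1) / -w' r
  have hrt : r ≤ t := le_add_of_nonneg_right (div_nonneg (by linarith [hpos r hr]) (by linarith))
  have hchord : w t - w r ≤ w' r * (t - r) :=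
    sub_le_mul_sub_of_hasDerivAt hrt (fun x hx => hw x (le_trans hr hx.1))
      (fun _ hx => hanti hr (le_trans hr hx.1.le) hx.1.le)
  have : w' r * (t - r) = -(w r + 1) := by
    simp only [t, add_sub_cancel_left]; field_simp [hneg.ne]
  linarith [hpos t (le_trans hr hrt)]

lemma deriv_mul_sub_le_of_antitoneOn (hw : ∀ r ∈ Ici R, HasDerivAt w (w' r) r)
    (hanti : AntitoneOn w' (Ici R)) {a b : ℝ} (ha : R ≤ a) (hab : a ≤ b) :
    w' b * (b - a) ≤ w b - w a :=
  mul_sub_le_sub_of_hasDerivAt hab (fun x hx => hw x (le_trans ha hx.1))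
    (fun _ hx => hanti (le_trans ha hx.1.le) (le_trans ha hab) hx.2.le)

lemma mul_cube_div_le_deriv (hc : 0 ≤ c) (hR : 0 < R)
    (hw' : ∀ r ∈ Ici R, HasDerivAt w' (w'' r) r)
    (hw'' : ∀ r ∈ Ici R, w'' r ≤ -c * w r ^ 3 / r ^ 2) (hw'nonneg : ∀ r ∈ Ici R, 0 ≤ w' r)
    ⦃r m : ℝ⦄ (hr : R ≤ r) (hm : 0 ≤ m) (hmw : ∀ t ∈ Icc r (2 * r), m ≤ w t) :
    c * m ^ 3 / (4 * r) ≤ w' r := by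
  have hr0 : 0 < r := hR.trans_le hr
  have hchord : w' (2 * r) - w' r ≤ -(c * m ^ 3 / (4 * r ^ 2)) * (2 * r - r) := by
    refine sub_le_mul_sub_of_hasDerivAt (by linarith)
      (fun t ht => hw' t (mem_Ici.2 (by linarith [ht.1])))
      fun t ht => (hw'' t (mem_Ici.2 (by linarith [ht.1]))).trans ?_
    have ht0 : 0 < t := by linarith [ht.1]
    rw [neg_mul, neg_div, neg_le_neg_iff, div_le_div_iff₀ (by positivity) (by positivity)]
    have hcube : m ^ 3 ≤ w t ^ 3 := pow_le_pow_left₀ hm (hmw t (Ioo_subset_Icc_self ht)) 3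
    have hsq : t ^ 2 ≤ 4 * r ^ 2 := by nlinarith [ht.2]
    exact mul_le_mul (mul_le_mul_of_nonneg_left hcube hc) hsq (sq_nonneg _)
      (mul_nonneg hc ((pow_nonneg hm 3).trans hcube))
  have : c * m ^ 3 / (4 * r ^ 2) * (2 * r - r) = c * m ^ 3 / (4 * r) := by field_simp; ring
  linarith [hw'nonneg (2 * r) (mem_Ici.2 (by linarith))]

theorem eqOn_zero_of_nonneg_of_hasDerivAt_le_neg_cube (hc : 0 < c) (hR : 0 < R)
    (hw : ∀ r ∈ Ici R, HasDerivAt w (w' r) r) (hw' : ∀ r ∈ Ici R, HasDerivAt w' (w'' r) r)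
    (hw'' : ∀ r ∈ Ici R, w'' r ≤ -c * w r ^ 3 / r ^ 2) (hpos : ∀ r ∈ Ici R, 0 ≤ w r) :
    EqOn w 0 (Ici R) := by
  have hanti : AntitoneOn w' (Ici R) :=
    antitoneOn_of_hasDerivAt_nonpos (convex_Ici R) hw' fun r hr => by
      rw [interior_Ici] at hr
      have hr0 : 0 < r := hR.trans hr
      refine (hw'' r (mem_Ici.2 hr.le)).trans (div_nonpos_of_nonpos_of_nonneg ?_ (sq_nonneg r))
      nlinarith [pow_nonneg (hpos r (mem_Ici.2 hr.le)) 3]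
  have hw'nonneg := deriv_nonneg_of_antitoneOn_of_nonneg hw hanti hpos
  have hmono : MonotoneOn w (Ici R) :=
    monotoneOn_of_hasDerivAt_nonneg (convex_Ici R) hw fun r hr =>
      hw'nonneg r (interior_subset hr)
  have hlower := mul_cube_div_le_deriv hc.le hR hw' hw'' hw'nonneg
  -- concavity gives `w' r * (r / 2) ≤ w r`; together with `w' r ≥ c w(r)³ / 4r` this bounds `w`
  have hbdd : ∀ r ∈ Ici (2 * R), c * w r ^ 2 ≤ 8 := by
    intro r hr
    simp only [mem_Ici] at hr
    have hr0 : 0 < r := by linarith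
    have hRr : R ≤ r := by linarith
    have hwr := hpos r hRr
    have hlow : c * w r ^ 3 / (4 * r) ≤ w' r :=
      hlower hRr hwr fun t ht => hmono hRr (hRr.trans ht.1) ht.1
    have hup : w' r * (r - r / 2) ≤ w r - w (r / 2) :=
      deriv_mul_sub_le_of_antitoneOn hw hanti (by linarith) (by linarith)
    have hhalf := hpos (r / 2) (mem_Ici.2 (by linarith))
    have hcube : c * w r ^ 3 ≤ 8 * w r := by
      have : c * w r ^ 3 / (4 * r) * (r - r / 2) = c * w r ^ 3 / 8 := by field_simp; ring
      nlinarith [mul_le_mul_of_nonneg_right hlow (by linarith : (0:ℝ) ≤ r - r / 2)]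
    rcases hwr.eq_or_lt with h | h
    · rw [← h]; norm_num
    · nlinarith
  refine fun r₀ hr₀ => by_contra fun hne => ?_
  have ha : 0 < w r₀ := (hpos r₀ hr₀).lt_of_ne' hne
  set β := c * w r₀ ^ 3 / 4
  have hβ : 0 < β := by positivity
  have hr₀pos : 0 < r₀ := hR.trans_le hr₀
  -- but `w' ≥ β / r` beyond `r₀`, so `w` grows at least like `β log r`
  have hlog : MonotoneOn (fun t => w t - β * Real.log t) (Ici r₀) := by
    refine monotoneOn_of_hasDerivAt_nonneg (f' := fun t => w' t - β * t⁻¹) (convex_Ici r₀)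
      (fun t ht => (hw t (mem_Ici.2 (hr₀.trans ht))).sub ((Real.hasDerivAt_log ?_).const_mul β)) ?_
    · exact (hr₀pos.trans_le ht).ne'
    intro t ht
    rw [interior_Ici] at ht
    have hRt : R ≤ t := hr₀.trans ht.le
    have hderiv := hlower hRt ha.le fun s hs => hmono hr₀ (hRt.trans hs.1) (ht.le.trans hs.1)
    have hβt : β * t⁻¹ = c * w r₀ ^ 3 / (4 * t) := by simp only [β]; field_simp
    linarith
  have htendsto : Tendsto w atTop atTop := by
    refine tendsto_atTop_mono' atTop ?_
      ((Real.tendsto_log_atTop.const_mul_atTop hβ).atTop_add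
        (tendsto_const_nhds (x := w r₀ - β * Real.log r₀)))
    filter_upwards [eventually_ge_atTop r₀] with t ht
    have := hlog (mem_Ici.2 le_rfl) (mem_Ici.2 ht) ht
    linarith
  obtain ⟨r, hr8, hrR⟩ := (((tendsto_pow_atTop two_ne_zero).comp htendsto).const_mul_atTop hc
    |>.eventually_gt_atTop 8 |>.and (eventually_ge_atTop (2 * R))).exists
  exact absurd (hbdd r hrR) (not_le.2 hr8)

end EmdenFowler

/-- Backward uniqueness for `w'' = -q w` with bounded `q`, by the energy `w² + w'²`. -/
theorem eqOn_zero_of_hasDerivAt_eq_neg_mul {w w' q : ℝ → ℝ} {a b K : ℝ}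
    (hw : ∀ r ∈ Icc a b, HasDerivAt w (w' r) r)
    (hw' : ∀ r ∈ Icc a b, HasDerivAt w' (-(q r * w r)) r)
    (hq : ∀ r ∈ Icc a b, |q r| ≤ K) (hb : w b = 0) (hb' : w' b = 0) : EqOn w 0 (Icc a b) := by
  intro r hr
  set E : ℝ → ℝ := fun s => (w s ^ 2 + w' s ^ 2) * Real.exp ((1 + K) * s)
  have hE : MonotoneOn E (Icc r b) := by
    refine monotoneOn_of_hasDerivAt_nonneg (convex_Icc r b)
      (f' := fun s => ((2 * (1 - q s) * w s * w' s) + (1 + K) * (w s ^ 2 + w' s ^ 2)) *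
        Real.exp ((1 + K) * s)) (fun s hs => ?_) (fun s hs => ?_)
    · have hs' : s ∈ Icc a b := ⟨hr.1.trans hs.1, hs.2⟩
      refine ((((hw s hs').fun_pow 2).fun_add ((hw' s hs').fun_pow 2)).fun_mul
        (((hasDerivAt_id' s).const_mul (1 + K)).exp)).congr_deriv ?_
      ring
    · rw [interior_Icc] at hs
      have hqs := abs_le.1 (hq s ⟨hr.1.trans hs.1.le, hs.2.le⟩)
      -- the bracket is `(2 + K - q)/2 (w + w')² + (K + q)/2 (w - w')²`
      have : 0 ≤ 2 * (1 - q s) * w s * w' s + (1 + K) * (w s ^ 2 + w' s ^ 2) := by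
        nlinarith [mul_nonneg (by linarith : 0 ≤ 2 + K - q s) (sq_nonneg (w s + w' s)),
          mul_nonneg (by linarith : 0 ≤ K + q s) (sq_nonneg (w s - w' s))]
      positivity
  have hEr := hE (left_mem_Icc.2 hr.2) (right_mem_Icc.2 hr.2) hr.2
  simp only [E, hb, hb', zero_pow two_ne_zero, add_zero, zero_mul] at hEr
  have : w r ^ 2 + w' r ^ 2 ≤ 0 := nonpos_of_mul_nonpos_left hEr (Real.exp_pos _)
  exact pow_eq_zero_iff two_ne_zero |>.1 (by nlinarith [sq_nonneg (w r), sq_nonneg (w' r)])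

section CubicSystem

variable {ι : Type*} [Fintype ι] [DecidableEq ι] (μ : ι → ℝ) (B : ι → ι → ℝ)

def cubicPotential (b : ι → ℝ) (j : ι) : ℝ :=
  μ j * b j ^ 2 + ∑ i ∈ Finset.univ.erase j, B i j * b i ^ 2

def cubicNonlinearity (b : ι → ℝ) (j : ι) : ℝ :=
  μ j * b j ^ 3 + ∑ i ∈ Finset.univ.erase j, B i j * b i ^ 2 * b j

variable {μ B}

lemma cubicNonlinearity_eq_cubicPotential_mul (b : ι → ℝ) (j : ι) :
    cubicNonlinearity μ B b j = cubicPotential μ B b j * b j := by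
  simp only [cubicNonlinearity, cubicPotential, add_mul, Finset.sum_mul]
  ring

lemma abs_cubicPotential_le {b : ι → ℝ} (hb : ∀ i, |b i| ≤ 1) (j : ι) :
    |cubicPotential μ B b j| ≤ |μ j| + ∑ i ∈ Finset.univ.erase j, |B i j| := by
  have hsq : ∀ i, b i ^ 2 ≤ 1 := fun i => by
    rw [← sq_abs]; exact pow_le_one₀ (abs_nonneg _) (hb i)
  have hterm : ∀ c : ℝ, ∀ i, |c * b i ^ 2| ≤ |c| := fun c i => by
    rw [abs_mul, abs_of_nonneg (sq_nonneg (b i))]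
    exact mul_le_of_le_one_right (abs_nonneg c) (hsq i)
  calc |cubicPotential μ B b j|
      ≤ |μ j * b j ^ 2| + ∑ i ∈ Finset.univ.erase j, |B i j * b i ^ 2| :=
        (abs_add_le _ _).trans (by gcongr; exact Finset.abs_sum_le_sum_abs _ _)
    _ ≤ |μ j| + ∑ i ∈ Finset.univ.erase j, |B i j| :=
        add_le_add (hterm _ _) (Finset.sum_le_sum fun i _ => hterm _ _)

lemma cubicNonlinearity_mul_sign {σ : ι → ℝ} (hσ : ∀ i, σ i ^ 2 = 1) (b : ι → ℝ) (j : ι) :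
    cubicNonlinearity μ B (fun i => σ i * b i) j = σ j * cubicNonlinearity μ B b j := by
  have hσ3 : σ j ^ 3 = σ j := by rw [pow_succ, hσ, one_mul]
  simp only [cubicNonlinearity, mul_add, Finset.mul_sum, mul_pow, hσ, hσ3]
  ring_nf

lemma mul_sum_pow_three_le_sum_cubicNonlinearity {ε : ℝ} (hε : 0 ≤ ε)
    (hμ : ∀ j, 2 * (Fintype.card ι : ℝ) ^ 2 * ε ≤ μ j) (hB : ∀ i j, i ≠ j → |B i j| ≤ ε)
    {b : ι → ℝ} (hb : ∀ j, 0 ≤ b j) :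
    ε * (∑ j, b j) ^ 3 ≤ ∑ j, cubicNonlinearity μ B b j := by
  have hsum : 0 ≤ ∑ j, b j := Finset.sum_nonneg fun j _ => hb j
  have hdiag : 2 * ε * (∑ j, b j) ^ 3 ≤ ∑ j, μ j * b j ^ 3 :=
    calc 2 * ε * (∑ j, b j) ^ 3
        ≤ 2 * ε * ((Fintype.card ι : ℝ) ^ 2 * ∑ j, b j ^ 3) := by
          gcongr; exact pow_sum_le_card_mul_sum_pow (fun j _ => hb j) 2
      _ = ∑ j, 2 * (Fintype.card ι : ℝ) ^ 2 * ε * b j ^ 3 := by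
          rw [Finset.mul_sum, Finset.mul_sum]; exact Finset.sum_congr rfl fun j _ => by ring
      _ ≤ ∑ j, μ j * b j ^ 3 := by gcongr with j; exacts [pow_nonneg (hb j) 3, hμ j]
  have hcross : -(ε * (∑ j, b j) ^ 3) ≤
      ∑ j, ∑ i ∈ Finset.univ.erase j, B i j * b i ^ 2 * b j :=
    calc -(ε * (∑ j, b j) ^ 3)
        ≤ -(ε * ((∑ i, b i ^ 2) * ∑ j, b j)) := by
          rw [pow_succ]
          gcongr
          exact Finset.sum_sq_le_sq_sum_of_nonneg fun i _ => hb i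
      _ ≤ -(ε * ∑ j, ∑ i ∈ Finset.univ.erase j, b i ^ 2 * b j) := by
          rw [Finset.sum_mul_sum, Finset.sum_comm]
          exact neg_le_neg <| mul_le_mul_of_nonneg_left (Finset.sum_le_sum fun j _ =>
            Finset.sum_le_sum_of_subset_of_nonneg (Finset.erase_subset _ _)
              fun i _ _ => mul_nonneg (sq_nonneg _) (hb j)) hε
      _ = ∑ j, ∑ i ∈ Finset.univ.erase j, -ε * (b i ^ 2 * b j) := by
          simp only [Finset.mul_sum, neg_mul, Finset.sum_neg_distrib]
      _ ≤ ∑ j, ∑ i ∈ Finset.univ.erase j, B i j * b i ^ 2 * b j := by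
          refine Finset.sum_le_sum fun j _ => Finset.sum_le_sum fun i hi => ?_
          rw [mul_assoc]
          exact mul_le_mul_of_nonneg_right (abs_le.1 (hB i j (Finset.ne_of_mem_erase hi))).1
            (mul_nonneg (sq_nonneg _) (hb j))
  simp only [cubicNonlinearity, Finset.sum_add_distrib]
  linarith

end CubicSystem

lemma exists_pos_forall_mul_le {ι : Type*} [Finite ι] {μ : ι → ℝ} (hμ : ∀ j, 0 < μ j) (C : ℝ) :
    ∃ ε > 0, ∀ j, C * ε ≤ μ j := by
  have h : ∀ j, ∀ᶠ ε in 𝓝[>] (0 : ℝ), C * ε ≤ μ j := fun j =>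
    nhdsWithin_le_nhds <| ((continuous_const_mul C).tendsto' 0 0 (mul_zero C)).eventually
      (eventually_le_nhds (hμ j))
  exact ((eventually_all.2 h).and self_mem_nhdsWithin).exists.imp fun ε h => ⟨h.2, h.1⟩

section ProfileSystem

variable {ι : Type*} [Fintype ι] [DecidableEq ι] {μ : ι → ℝ} {B : ι → ι → ℝ} {v W : ι → ℝ → ℝ}

theorem eventually_eq_zero_of_eventually_nonneg_mul {ε : ℝ} (hε : 0 < ε)
    (hμ : ∀ j, 2 * (Fintype.card ι : ℝ) ^ 2 * ε ≤ μ j) (hB : ∀ i j, i ≠ j → |B i j| ≤ ε)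
    (hv : ∀ j r, 0 < r → HasDerivAt (fun s => s * v j s) (W j r) r)
    (hW : ∀ j r, 0 < r → HasDerivAt (W j) (-(r * cubicNonlinearity μ B (fun i => v i r) j)) r)
    {σ : ι → ℝ} (hσ : ∀ j, σ j ^ 2 = 1) (hsign : ∀ᶠ r in atTop, ∀ j, 0 ≤ σ j * v j r) :
    ∀ᶠ r in atTop, ∀ j, v j r = 0 := by
  obtain ⟨R, hR⟩ := eventually_atTop.1 (hsign.and (eventually_ge_atTop 1))
  have hR0 : 0 < R := zero_lt_one.trans_le (hR R le_rfl).2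
  have hpos : ∀ r ∈ Ici R, 0 < r := fun r hr => hR0.trans_le hr
  set w : ℝ → ℝ := fun r => ∑ j, σ j * (r * v j r)
  have hw_eq : ∀ r, w r = r * ∑ j, σ j * v j r := fun r => by
    simp only [w, Finset.mul_sum]; exact Finset.sum_congr rfl fun j _ => by ring
  have hw : ∀ r ∈ Ici R, HasDerivAt w (∑ j, σ j * W j r) r := fun r hr =>
    HasDerivAt.fun_sum fun j _ => (hv j r (hpos r hr)).const_mul (σ j)
  have hw' : ∀ r ∈ Ici R, HasDerivAt (fun r => ∑ j, σ j * W j r)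
      (∑ j, σ j * -(r * cubicNonlinearity μ B (fun i => v i r) j)) r := fun r hr =>
    HasDerivAt.fun_sum fun j _ => (hW j r (hpos r hr)).const_mul (σ j)
  have hw'' : ∀ r ∈ Ici R, ∑ j, σ j * -(r * cubicNonlinearity μ B (fun i => v i r) j) ≤
      -ε * w r ^ 3 / r ^ 2 := fun r hr => by
    have hr0 := hpos r hr
    have hcube := mul_sum_pow_three_le_sum_cubicNonlinearity hε.le hμ hB (hR r hr).1
    simp only [cubicNonlinearity_mul_sign hσ] at hcube
    have hlhs : ∑ j, σ j * -(r * cubicNonlinearity μ B (fun i => v i r) j) =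
        -(r * ∑ j, σ j * cubicNonlinearity μ B (fun i => v i r) j) := by
      rw [Finset.mul_sum, ← Finset.sum_neg_distrib]
      exact Finset.sum_congr rfl fun j _ => by ring
    have hrhs : -ε * w r ^ 3 / r ^ 2 = -(r * (ε * (∑ j, σ j * v j r) ^ 3)) := by
      rw [hw_eq]; field_simp
    rw [hlhs, hrhs]
    exact neg_le_neg (mul_le_mul_of_nonneg_left hcube hr0.le)
  have hwzero := eqOn_zero_of_nonneg_of_hasDerivAt_le_neg_cube hε hR0 hw hw' hw'' fun r hr => by
    rw [hw_eq]; exact mul_nonneg (hpos r hr).le (Finset.sum_nonneg fun j _ => (hR r hr).1 j)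
  filter_upwards [eventually_ge_atTop R] with r hr j
  have hsum : ∑ i, σ i * v i r = 0 := by
    have := hwzero hr
    rw [Pi.zero_apply, hw_eq] at this
    exact (mul_eq_zero.1 this).resolve_left (hpos r hr).ne'
  have hj := (Finset.sum_eq_zero_iff_of_nonneg fun i _ => (hR r hr).1 i).1 hsum j
    (Finset.mem_univ j)
  exact (mul_eq_zero.1 hj).resolve_left fun h => by simpa [h] using hσ j

theorem eq_zero_of_eventually_eq_zero
    (hv : ∀ j r, 0 < r → HasDerivAt (fun s => s * v j s) (W j r) r)
    (hW : ∀ j r, 0 < r → HasDerivAt (W j) (-(r * cubicNonlinearity μ B (fun i => v i r) j)) r)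
    (hbd : ∀ j r, |v j r| ≤ 1) (hzero : ∀ᶠ r in atTop, ∀ j, v j r = 0) :
    ∀ j r, 0 < r → v j r = 0 := by
  obtain ⟨R, hR⟩ := eventually_atTop.1 (hzero.and (eventually_gt_atTop 0))
  have hR0 : 0 < R := (hR R le_rfl).2
  intro j r hr
  rcases le_or_gt R r with hRr | hrR
  · exact (hR r hRr).1 j
  -- at `R + 1` the data `(s vⱼ, Wⱼ)` vanish, and `(s vⱼ)'' = -qⱼ (s vⱼ)` with bounded `qⱼ`
  have hW1 : W j (R + 1) = 0 := by
    refine (hv j _ (by linarith)).unique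
      ((hasDerivAt_const (R + 1) (0 : ℝ)).congr_of_eventuallyEq ?_)
    filter_upwards [Ioi_mem_nhds (lt_add_one R)] with s hs
    rw [(hR s (le_of_lt hs)).1 j, mul_zero]
  have := eqOn_zero_of_hasDerivAt_eq_neg_mul (w := fun s => s * v j s)
    (q := fun s => cubicPotential μ B (fun i => v i s) j)
    (fun s hs => hv j s (hr.trans_le hs.1)) (fun s hs => ?_)
    (fun s _ => abs_cubicPotential_le (fun i => hbd i s) j)
    (by rw [(hR _ (by linarith)).1 j, mul_zero]) hW1 ⟨le_rfl, by linarith⟩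
  · exact (mul_eq_zero.1 this).resolve_left hr.ne'
  · refine (hW j s (hr.trans_le hs.1)).congr_deriv ?_
    rw [cubicNonlinearity_eq_cubicPotential_mul]
    ring

end ProfileSystem

section Radial

variable {E : Type*} [NormedAddCommGroup E] [InnerProductSpace ℝ E]

lemma norm_smul_add_smul_sq {e f : E} (he : ‖e‖ = 1) (hf : ‖f‖ = 1) (hef : inner ℝ e f = 0)
    (a b : ℝ) : ‖a • e + b • f‖ ^ 2 = a ^ 2 + b ^ 2 := by
  rw [norm_add_sq_real, real_inner_smul_left, real_inner_smul_right, hef, norm_smul, norm_smul,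
    he, hf, Real.norm_eq_abs, Real.norm_eq_abs]
  simp only [mul_one, mul_zero, sq_abs]
  ring

lemma fderiv_fderiv_apply_orthogonal_of_radial {u : E → ℝ} (hu : ContDiff ℝ 2 u) {V : ℝ → ℝ}
    (hV : ∀ x, u x = V ‖x‖) {e f : E} (he : ‖e‖ = 1) (hf : ‖f‖ = 1) (hef : inner ℝ e f = 0)
    {r : ℝ} (hr : r ≠ 0) :
    fderiv ℝ (fderiv ℝ u) (r • e) f f = fderiv ℝ u (r • e) e / r := by
  have hu1 : ∀ x, HasFDerivAt u (fderiv ℝ u x) x := fun x =>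
    (hu.differentiable (by norm_num) x).hasFDerivAt
  have hu2 : ∀ x, HasFDerivAt (fderiv ℝ u) (fderiv ℝ (fderiv ℝ u) x) x := fun x =>
    ((hu.fderiv_right (m := 1) (by norm_num)).differentiable (by norm_num) x).hasFDerivAt
  -- differentiate `u` twice along the circle `γ` of radius `|r|` in the plane of `e` and `f`
  let γ : ℝ → E := fun θ => (r * cos θ) • e + (r * sin θ) • f
  let γ' : ℝ → E := fun θ => (-(r * sin θ)) • e + (r * cos θ) • f
  have hγ : ∀ θ, HasDerivAt γ (γ' θ) θ := fun θ => by
    convert (((hasDerivAt_cos θ).const_mul r).smul_const e).fun_add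
      (((hasDerivAt_sin θ).const_mul r).smul_const f) using 1
    simp only [γ']; module
  have hγ' : ∀ θ, HasDerivAt γ' (-γ θ) θ := fun θ => by
    convert (((hasDerivAt_sin θ).const_mul r).fun_neg.smul_const e).fun_add
      (((hasDerivAt_cos θ).const_mul r).smul_const f) using 1
    show -((r * cos θ) • e + (r * sin θ) • f) = _
    module
  have hnorm : ∀ θ, ‖γ θ‖ = |r| := fun θ => by
    refine (sq_eq_sq₀ (norm_nonneg _) (abs_nonneg r)).1 ?_
    rw [norm_smul_add_smul_sq he hf hef, sq_abs]
    linear_combination r ^ 2 * sin_sq_add_cos_sq θ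
  have hzero : ∀ θ, fderiv ℝ u (γ θ) (γ' θ) = 0 := fun θ =>
    ((hu1 _).comp_hasDerivAt θ (hγ θ)).unique <| by
      simpa only [Function.comp_def, hV, hnorm] using hasDerivAt_const θ (V |r|)
  have key := (((hu2 _).comp_hasDerivAt 0 (hγ 0)).clm_apply (hγ' 0)).unique <| by
    simpa only [Function.comp_apply, hzero] using hasDerivAt_const (0 : ℝ) (0 : ℝ)
  simp only [γ, γ', cos_zero, sin_zero, mul_one, mul_zero, neg_zero, zero_smul, add_zero,
    zero_add, Function.comp_apply, map_smul, FunLike.coe_smul, Pi.smul_apply,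
    smul_eq_mul, map_neg] at key
  rw [eq_div_iff hr]
  have : r * (fderiv ℝ (fderiv ℝ u) (r • e) f f * r - fderiv ℝ u (r • e) e) = 0 := by
    linear_combination key
  exact sub_eq_zero.1 ((mul_eq_zero.1 this).resolve_left hr)

end Radial

local notation "e₀" => EuclideanSpace.single (0 : Fin 3) (1 : ℝ)

noncomputable def profile (u : EuclideanSpace ℝ (Fin 3) → ℝ) (r : ℝ) : ℝ :=
  u (r • e₀)

lemma fderiv_fderiv_apply_const {E : Type*} [NormedAddCommGroup E] [NormedSpace ℝ E]
    {u : E → ℝ} {x : E} (hu : DifferentiableAt ℝ (fderiv ℝ u) x) (v w : E) :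
    fderiv ℝ (fun y => fderiv ℝ u y v) x w = fderiv ℝ (fderiv ℝ u) x w v := by
  rw [fderiv_clm_apply hu (differentiableAt_const v)]
  simp

section Profile

variable {u : EuclideanSpace ℝ (Fin 3) → ℝ}

lemma hasDerivAt_profile (hu : Differentiable ℝ u) (r : ℝ) :
    HasDerivAt (profile u) (fderiv ℝ u (r • e₀) e₀) r :=
  (hu _).hasFDerivAt.comp_hasDerivAt r
    ((hasDerivAt_id r).smul_const e₀ |>.congr_deriv (one_smul _ _))

lemma hasDerivAt_fderiv_profile (hu : ContDiff ℝ 2 u) (r : ℝ) :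
    HasDerivAt (fun s => fderiv ℝ u (s • e₀) e₀) (fderiv ℝ (fderiv ℝ u) (r • e₀) e₀ e₀) r := by
  have hd2 : Differentiable ℝ (fderiv ℝ u) :=
    (hu.fderiv_right (m := 1) (by norm_num)).differentiable (by norm_num)
  exact ((hd2 _).hasFDerivAt.comp_hasDerivAt r ((hasDerivAt_id r).smul_const e₀ |>.congr_deriv
    (one_smul _ _))).clm_apply (hasDerivAt_const r e₀) |>.congr_deriv (by simp)

lemma lap3_smul_single_zero (hu : ContDiff ℝ 2 u) (hrad : IsRadial u) {r : ℝ} (hr : r ≠ 0) :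
    lap3 u (r • e₀) = fderiv ℝ (fderiv ℝ u) (r • e₀) e₀ e₀ + 2 * (fderiv ℝ u (r • e₀) e₀ / r) := by
  obtain ⟨V, hV⟩ := hrad
  have hd2 : Differentiable ℝ (fderiv ℝ u) :=
    (hu.fderiv_right (m := 1) (by norm_num)).differentiable (by norm_num)
  have hON := EuclideanSpace.orthonormal_single (𝕜 := ℝ) (ι := Fin 3)
  have hcross : ∀ i : Fin 3, i ≠ 0 → fderiv ℝ (fderiv ℝ u) (r • e₀) (EuclideanSpace.single i 1)
      (EuclideanSpace.single i 1) = fderiv ℝ u (r • e₀) e₀ / r := fun i hi =>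
    fderiv_fderiv_apply_orthogonal_of_radial hu hV (hON.1 0) (hON.1 i) (hON.2 hi.symm) hr
  simp only [lap3, fderiv_fderiv_apply_const (hd2 _), Fin.sum_univ_three]
  rw [hcross 1 (by decide), hcross 2 (by decide)]
  ring

lemma hasDerivAt_mul_profile (hu : Differentiable ℝ u) (r : ℝ) :
    HasDerivAt (fun s => s * profile u s) (profile u r + r * fderiv ℝ u (r • e₀) e₀) r :=
  ((hasDerivAt_id r).mul (hasDerivAt_profile hu r)).congr_deriv (by simp)

/-- With `v = profile u`, this is `(r v)'' = r Δu`. -/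
lemma hasDerivAt_profile_add_mul_fderiv (hu : ContDiff ℝ 2 u) (hrad : IsRadial u) {r : ℝ}
    (hr : r ≠ 0) :
    HasDerivAt (fun s => profile u s + s * fderiv ℝ u (s • e₀) e₀) (r * lap3 u (r • e₀)) r := by
  refine ((hasDerivAt_profile (hu.differentiable (by norm_num)) r).add
    ((hasDerivAt_id' r).mul (hasDerivAt_fderiv_profile hu r))).congr_deriv ?_
  rw [lap3_smul_single_zero hu hrad hr]
  field_simp
  ring

end Profile

lemma norm_smul_single_zero (r : ℝ) : ‖r • e₀‖ = |r| := by
  rw [norm_smul, PiLp.norm_single, norm_one, mul_one, Real.norm_eq_abs]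

lemma IsRadial.eq_profile_norm {u : EuclideanSpace ℝ (Fin 3) → ℝ} (hu : IsRadial u)
    (x : EuclideanSpace ℝ (Fin 3)) :
    u x = profile u ‖x‖ := by
  obtain ⟨V, hV⟩ := hu
  rw [profile, hV, hV, norm_smul_single_zero, abs_norm]

lemma exists_strictMono_mul_neg {V : ℝ → ℝ} (hpos : ∃ᶠ r in atTop, 0 < V r)
    (hneg : ∃ᶠ r in atTop, V r < 0) (R : ℝ) :
    ∃ ρ : ℕ → ℝ, StrictMono ρ ∧ R < ρ 0 ∧ ∀ n, V (ρ n) * V (ρ (n + 1)) < 0 := by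
  choose f hf hfV using frequently_atTop'.1 hpos
  choose g hg hgV using frequently_atTop'.1 hneg
  let ρ : ℕ → ℝ := fun n => Nat.rec (f R) (fun _ r => if 0 < V r then g r else f r) n
  have hρ : ∀ n, ρ (n + 1) = if 0 < V (ρ n) then g (ρ n) else f (ρ n) := fun _ => rfl
  have hne : ∀ n, V (ρ n) ≠ 0 := by
    rintro (_ | n)
    · exact (hfV R).ne'
    · rw [hρ]; split_ifs
      exacts [(hgV _).ne, (hfV _).ne']
  refine ⟨ρ, strictMono_nat_of_lt_succ fun n => ?_, hf R, fun n => ?_⟩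
  · rw [hρ]; split_ifs
    exacts [hg _, hf _]
  · rw [hρ]; split_ifs with h
    · exact mul_neg_of_pos_of_neg h (hgV _)
    · exact mul_neg_of_neg_of_pos ((not_lt.1 h).lt_of_ne (hne n)) (hfV _)

lemma ChangesSignAtMostOn.exists_eventually_nonneg_mul_profile
    {u : EuclideanSpace ℝ (Fin 3) → ℝ} {P : ℕ} (hu : ChangesSignAtMostOn u univ P) :
    ∃ σ : ℝ, σ ^ 2 = 1 ∧ ∀ᶠ r in atTop, 0 ≤ σ * profile u r := by
  by_contra! h
  have hpos : ∃ᶠ r in atTop, 0 < profile u r := by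
    simpa [Filter.not_eventually] using h (-1) (by norm_num)
  have hneg : ∃ᶠ r in atTop, profile u r < 0 := by
    simpa [Filter.not_eventually] using h 1 (by norm_num)
  obtain ⟨ρ, hρ, hρ0, hsign⟩ := exists_strictMono_mul_neg hpos hneg 0
  have hρpos : ∀ n, 0 < ρ n := fun n => hρ0.trans_le (hρ.monotone n.zero_le)
  have hnorm : ∀ n, ‖ρ n • e₀‖ = ρ n := fun n => by
    rw [norm_smul_single_zero, abs_of_pos (hρpos n)]
  refine hu ⟨fun i => ρ i • e₀, fun _ => mem_univ _, fun i => ?_,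
    fun i j hij => ?_, fun i => hsign i⟩
  · rw [hnorm]; exact hρpos i
  · rw [hnorm, hnorm]; exact hρ hij

theorem liouville_R3_small_general (N : ℕ) (μ : Fin N → ℝ) (hμ : ∀ j, 0 < μ j)
    (P : Fin N → ℕ) :
    ∃ ε₁ : ℝ, 0 < ε₁ ∧
      ∀ B : Fin N → Fin N → ℝ,
        (∀ i j, i ≠ j → B i j = B j i) →
        (∀ i j, i ≠ j → |B i j| < ε₁) →
        ∀ u : Fin N → EuclideanSpace ℝ (Fin 3) → ℝ,
          (∀ j, IsRadial (u j)) →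
          (∀ j, ContDiff ℝ 2 (u j)) →
          (∀ j x, |u j x| ≤ 1) →
          (∀ j, (∀ x, u j x = 0) ∨ ChangesSignAtMostOn (u j) Set.univ (P j)) →
          (∀ j x, -lap3 (u j) x =
              μ j * u j x ^ 3 + ∑ i ∈ Finset.univ.erase j, B i j * u i x ^ 2 * u j x) →
          ∀ j x, u j x = 0 := by
  obtain ⟨ε, hε, hεμ⟩ := exists_pos_forall_mul_le hμ (2 * (Fintype.card (Fin N) : ℝ) ^ 2)
  refine ⟨ε, hε, fun B _ hB u hrad hu hbd hsgn hpde => ?_⟩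
  have hv : ∀ j r, 0 < r → HasDerivAt (fun s => s * profile (u j) s)
      (profile (u j) r + r * fderiv ℝ (u j) (r • e₀) e₀) r :=
    fun j r _ => hasDerivAt_mul_profile ((hu j).differentiable (by norm_num)) r
  have hW : ∀ j r, 0 < r →
      HasDerivAt (fun s => profile (u j) s + s * fderiv ℝ (u j) (s • e₀) e₀)
        (-(r * cubicNonlinearity μ B (fun i => profile (u i) r) j)) r := fun j r hr => by
    have hF : cubicNonlinearity μ B (fun i => profile (u i) r) j = -lap3 (u j) (r • e₀) :=
      (hpde j _).symm
    simpa only [hF, mul_neg, neg_neg] using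
      hasDerivAt_profile_add_mul_fderiv (hu j) (hrad j) hr.ne'
  obtain ⟨σ, hσ, hsign⟩ : ∃ σ : Fin N → ℝ, (∀ j, σ j ^ 2 = 1) ∧
      ∀ᶠ r in atTop, ∀ j, 0 ≤ σ j * profile (u j) r := by
    choose σ hσ hsign using fun j => (hsgn j).elim
      (fun h => ⟨1, one_pow 2, Eventually.of_forall fun r => by simp [profile, h]⟩)
      ChangesSignAtMostOn.exists_eventually_nonneg_mul_profile
    exact ⟨σ, hσ, eventually_all.2 hsign⟩
  have hzero := eq_zero_of_eventually_eq_zero hv hW (fun j r => hbd j _)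
    (eventually_eq_zero_of_eventually_nonneg_mul hε hεμ (fun i j hij => (hB i j hij).le) hv hW
      hσ hsign)
  intro j x
  refine congrFun ((hu j).continuous.ext_on (dense_compl_singleton 0) continuous_const
    fun y hy => ?_) x
  rw [(hrad j).eq_profile_norm]
  exact hzero j _ (norm_pos_iff.2 hy)

theorem liouville_R3_small (N : ℕ) (hN : 2 ≤ N) (μ : Fin N → ℝ) (hμ : ∀ j, 0 < μ j)
    (P : Fin N → ℕ) :
    ∃ ε₁ : ℝ, 0 < ε₁ ∧
      ∀ B : Fin N → Fin N → ℝ,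
        (∀ i j, i ≠ j → B i j = B j i) →
        (∀ i j, i ≠ j → |B i j| < ε₁) →
        ∀ u : Fin N → EuclideanSpace ℝ (Fin 3) → ℝ,
          (∀ j, IsRadial (u j)) →
          (∀ j, ContDiff ℝ 2 (u j)) →
          (∀ j x, |u j x| ≤ 1) →
          (∀ j, (∀ x, u j x = 0) ∨ ChangesSignAtMostOn (u j) Set.univ (P j)) →
          (∀ j x, -lap3 (u j) x =
              μ j * u j x ^ 3 + ∑ i ∈ Finset.univ.erase j, B i j * u i x ^ 2 * u j x) →
          ∀ j x, u j x = 0 :=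
  liouville_R3_small_general N μ hμ P
end

section
/- Let N ≥ 2, let μ₁,…,μ_N > 0 be constants, let P₁,…,P_N ∈ ℕ, and suppose the real constants β_{ij} = β_{ji} (for i ≠ j) satisfy β_{ij} ≥ 0. If u₁,…,u_N : ℝ → ℝ are functions of class C² such that for every j one has |u_j(t)| ≤ 1 for all t ∈ ℝ, u_j is either identically zero or changes sign at most P_j times, and −u_j'' = μ_j u_j³ + Σ_{i≠j} β_{ij} u_i² u_j holds pointwise on ℝ, then u_j ≡ 0 for every j = 1,…,N. -/
open scoped BigOperators

/-- There are `k + 1` increasing points of `I` on which `u` successively changes sign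
`k` times. -/
def SignChangeWitness1D (u : ℝ → ℝ) (I : Set ℝ) (k : ℕ) : Prop :=
  ∃ t : Fin (k + 1) → ℝ, (∀ i, t i ∈ I) ∧ StrictMono t ∧
    (∀ i : Fin k, u (t i.castSucc) * u (t i.succ) < 0)

/-- `u` changes sign at most `P` times on `I`. -/
def ChangesSignAtMost1D (u : ℝ → ℝ) (I : Set ℝ) (P : ℕ) : Prop :=
  ¬ SignChangeWitness1D u I (P + 1)

/-! Each component solves `-v'' = m v³ + c v` with `m > 0` and `c = ∑ᵢ Bᵢⱼ uᵢ² ≥ 0`, so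
`v'' ≤ -m v³ ≤ 0` wherever `v ≥ 0`, and symmetrically where `v ≤ 0`. Finitely many sign changes
give `v` one sign on a right ray, say `v ≥ 0`; there `v` is concave and bounded below, hence
nondecreasing, and a positive value `v(t₀)` would force `v'' ≤ -m v(t₀)³ < 0` from `t₀` on,
driving `v'` negative, so `v` vanishes on a ray. At the supremum `S` of the support,
`v(S) = v'(S) = 0` and `v` again has one sign just left of `S`; concavity with a horizontal
tangent at `S` makes `v` vanish there as well, contradicting the choice of `S`. -/

open Set

theorem ChangesSignAtMost1D.mono {u : ℝ → ℝ} {I J : Set ℝ} {P : ℕ}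
    (hP : ChangesSignAtMost1D u I P) (hJI : J ⊆ I) : ChangesSignAtMost1D u J P :=
  fun ⟨t, ht, hmono, hsign⟩ => hP ⟨t, fun i => hJI (ht i), hmono, hsign⟩

theorem signChangeWitness1D_of_forall_exists_gt {u : ℝ → ℝ} {D : Set ℝ}
    (hstep : ∀ x ∈ D, u x ≠ 0 → ∃ y ∈ D, x < y ∧ u x * u y < 0)
    (hstart : ∃ x ∈ D, u x ≠ 0) (k : ℕ) : SignChangeWitness1D u D k := by
  let D' := {x // x ∈ D ∧ u x ≠ 0}
  have hstep' : ∀ x : D', ∃ y : D', x.1 < y.1 ∧ u x.1 * u y.1 < 0 := by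
    rintro ⟨x, hxD, hx⟩
    obtain ⟨y, hyD, hxy, hneg⟩ := hstep x hxD hx
    exact ⟨⟨y, hyD, right_ne_zero_of_mul hneg.ne⟩, hxy, hneg⟩
  choose f hlt hneg using hstep'
  obtain ⟨x₀, hx₀D, hx₀⟩ := hstart
  let s : ℕ → ℝ := fun n => (f^[n] ⟨x₀, hx₀D, hx₀⟩).1
  have hs : StrictMono s := strictMono_nat_of_lt_succ fun n => by
    simp only [s, Function.iterate_succ_apply']
    exact hlt _
  refine ⟨fun i => s i, fun i => (f^[i] _).2.1, hs.comp Fin.val_strictMono, fun i => ?_⟩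
  simp only [s, Fin.val_castSucc, Fin.val_succ, Function.iterate_succ_apply']
  exact hneg _

theorem ChangesSignAtMost1D.exists_sign_eventually {u : ℝ → ℝ} {D : Set ℝ} {P : ℕ}
    (hP : ChangesSignAtMost1D u D P) (hD : D.Nonempty) :
    ∃ x ∈ D, (∀ t ∈ D, x < t → 0 ≤ u t) ∨ (∀ t ∈ D, x < t → u t ≤ 0) := by
  by_contra! h
  refine hP (signChangeWitness1D_of_forall_exists_gt (fun x hxD hx => ?_) ?_ _)
  · obtain ⟨⟨a, haD, hxa, ha⟩, ⟨b, hbD, hxb, hb⟩⟩ := h x hxD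
    rcases hx.lt_or_gt with hx | hx
    · exact ⟨b, hbD, hxb, mul_neg_of_neg_of_pos hx hb⟩
    · exact ⟨a, haD, hxa, mul_neg_of_pos_of_neg hx ha⟩
  · obtain ⟨x, hxD⟩ := hD
    obtain ⟨-, ⟨a, haD, -, ha⟩⟩ := h x hxD
    exact ⟨a, haD, ha.ne'⟩

section Calculus

variable {f : ℝ → ℝ}

theorem not_bddBelow_of_deriv_le_neg (hf : Differentiable ℝ f) {s c : ℝ} (hc : 0 < c)
    (h : ∀ x, s ≤ x → deriv f x ≤ -c) : ¬ BddBelow (f '' Ici s) := by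
  rintro ⟨L, hL⟩
  have hLs : L ≤ f s := hL (mem_image_of_mem f self_mem_Ici)
  set y := s + (f s - L + 1) / c
  have hsy : s ≤ y := le_add_of_nonneg_right (div_nonneg (by linarith) hc.le)
  have hdecay : f y - f s ≤ -c * (y - s) :=
    (convex_Ici s).image_sub_le_mul_sub_of_deriv_le hf.continuous.continuousOn
      hf.differentiableOn (fun x hx => h x (interior_subset hx)) s self_mem_Ici y hsy hsy
  have hy : -c * (y - s) = -(f s - L + 1) := by
    simp only [y]
    field_simp
    ring
  have := hL (mem_image_of_mem f (show y ∈ Ici s from hsy))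
  linarith

theorem antitoneOn_deriv_of_deriv_deriv_nonpos {D : Set ℝ} (hD : Convex ℝ D)
    (hf : ContDiff ℝ 2 f) (h : ∀ x ∈ D, deriv (deriv f) x ≤ 0) : AntitoneOn (deriv f) D :=
  antitoneOn_of_deriv_nonpos hD (hf.continuous_deriv one_le_two).continuousOn
    hf.differentiable_deriv_two.differentiableOn fun x hx => h x (interior_subset hx)

theorem deriv_nonneg_of_antitoneOn_deriv (hf : Differentiable ℝ f) {T : ℝ}
    (hanti : AntitoneOn (deriv f) (Ici T)) (hbdd : BddBelow (f '' Ici T)) {x : ℝ}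
    (hx : T ≤ x) : 0 ≤ deriv f x := by
  by_contra! hneg
  refine not_bddBelow_of_deriv_le_neg hf (neg_pos.mpr hneg) (fun y hxy => ?_)
    (hbdd.mono (image_mono (Ici_subset_Ici.mpr hx)))
  rw [neg_neg]
  exact hanti (mem_Ici.mpr hx) (mem_Ici.mpr (hx.trans hxy)) hxy

theorem le_of_antitoneOn_deriv_of_deriv_eq_zero (hf : Differentiable ℝ f) {a b : ℝ}
    (hanti : AntitoneOn (deriv f) (Icc a b)) (hb : deriv f b = 0) {x : ℝ} (hx : x ∈ Icc a b) :
    f x ≤ f b := by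
  have hbmem : b ∈ Icc a b := right_mem_Icc.mpr (hx.1.trans hx.2)
  have hmono : MonotoneOn f (Icc a b) :=
    monotoneOn_of_deriv_nonneg (convex_Icc a b) hf.continuous.continuousOn hf.differentiableOn
      fun y hy => hb ▸ hanti (interior_subset hy) hbmem (interior_subset hy).2
  exact hmono hx hbmem hx.2

theorem Continuous.eq_zero_of_forall_gt (hf : Continuous f) {S : ℝ}
    (h : ∀ t, S < t → f t = 0) : f S = 0 :=
  EqOn.of_subset_closure (s := Ioi S) (t := Ici S) h hf.continuousOn continuousOn_const
    Ioi_subset_Ici_self (by rw [closure_Ioi]) self_mem_Ici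

end Calculus

section CubicODE

variable {v c : ℝ → ℝ} {m : ℝ}

theorem deriv_deriv_le_of_nonneg (hc : ∀ t, 0 ≤ c t)
    (hode : ∀ t, -deriv (deriv v) t = m * v t ^ 3 + c t * v t) {t : ℝ} (ht : 0 ≤ v t) :
    deriv (deriv v) t ≤ -m * v t ^ 3 := by
  linarith [hode t, mul_nonneg (hc t) ht]

theorem neg_deriv_deriv_neg (hode : ∀ t, -deriv (deriv v) t = m * v t ^ 3 + c t * v t) (t : ℝ) :
    -deriv (deriv (-v)) t = m * (-v) t ^ 3 + c t * (-v) t := by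
  simp only [deriv.neg', deriv.fun_neg', Pi.neg_apply]
  linarith [hode t]

theorem eq_zero_on_Ici_of_nonneg (hv : ContDiff ℝ 2 v) (hm : 0 < m) (hc : ∀ t, 0 ≤ c t)
    (hode : ∀ t, -deriv (deriv v) t = m * v t ^ 3 + c t * v t) {T : ℝ}
    (hnn : ∀ t, T ≤ t → 0 ≤ v t) {t₀ : ℝ} (ht₀ : T ≤ t₀) : v t₀ = 0 := by
  have hvd : Differentiable ℝ v := hv.differentiable two_ne_zero
  have hv'' : ∀ t, T ≤ t → deriv (deriv v) t ≤ -m * v t ^ 3 :=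
    fun t ht => deriv_deriv_le_of_nonneg hc hode (hnn t ht)
  have hv' : ∀ t, T ≤ t → 0 ≤ deriv v t :=
    fun t => deriv_nonneg_of_antitoneOn_deriv hvd
      (antitoneOn_deriv_of_deriv_deriv_nonpos (convex_Ici T) hv
        fun x hx => (hv'' x hx).trans (by nlinarith [pow_nonneg (hnn x hx) 3]))
      ⟨0, by rintro _ ⟨t, ht, rfl⟩; exact hnn t ht⟩
  have hmono : MonotoneOn v (Ici T) :=
    monotoneOn_of_deriv_nonneg (convex_Ici T) hvd.continuous.continuousOn hvd.differentiableOn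
      fun x hx => hv' x (interior_subset hx)
  by_contra hne
  have hpos : 0 < v t₀ := (hnn t₀ ht₀).lt_of_ne' hne
  refine not_bddBelow_of_deriv_le_neg hv.differentiable_deriv_two
    (by positivity : 0 < m * v t₀ ^ 3) (fun x hx => ?_) ⟨0, by rintro _ ⟨t, ht, rfl⟩; exact hv' t (ht₀.trans ht)⟩
  have hvx : v t₀ ≤ v x := hmono ht₀ (ht₀.trans hx) hx
  have : v t₀ ^ 3 ≤ v x ^ 3 := pow_le_pow_left₀ hpos.le hvx 3
  nlinarith [hv'' x (ht₀.trans hx)]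

theorem exists_eq_zero_on_Ici (hv : ContDiff ℝ 2 v) (hm : 0 < m) (hc : ∀ t, 0 ≤ c t)
    (hode : ∀ t, -deriv (deriv v) t = m * v t ^ 3 + c t * v t) {P : ℕ}
    (hP : ChangesSignAtMost1D v univ P) : ∃ T, ∀ t, T ≤ t → v t = 0 := by
  obtain ⟨x, -, hsign⟩ := hP.exists_sign_eventually univ_nonempty
  refine ⟨x + 1, fun t ht => ?_⟩
  have hxt : ∀ t, x + 1 ≤ t → x < t := fun t ht => by linarith
  rcases hsign with hsign | hsign
  · exact eq_zero_on_Ici_of_nonneg hv hm hc hode (fun t ht => hsign t trivial (hxt t ht)) ht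
  · exact neg_eq_zero.mp (eq_zero_on_Ici_of_nonneg hv.neg hm hc (neg_deriv_deriv_neg hode)
      (fun t ht => neg_nonneg.mpr (hsign t trivial (hxt t ht))) ht)

theorem eq_zero_on_Icc_of_nonneg (hv : ContDiff ℝ 2 v) (hm : 0 ≤ m) (hc : ∀ t, 0 ≤ c t)
    (hode : ∀ t, -deriv (deriv v) t = m * v t ^ 3 + c t * v t) {a S : ℝ}
    (hnn : ∀ t ∈ Icc a S, 0 ≤ v t) (hS : v S = 0) (hS' : deriv v S = 0) {t : ℝ}
    (ht : t ∈ Icc a S) : v t = 0 := by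
  have hanti : AntitoneOn (deriv v) (Icc a S) :=
    antitoneOn_deriv_of_deriv_deriv_nonpos (convex_Icc a S) hv fun x hx =>
      (deriv_deriv_le_of_nonneg hc hode (hnn x hx)).trans
        (by nlinarith [pow_nonneg (hnn x hx) 3])
  have := le_of_antitoneOn_deriv_of_deriv_eq_zero (hv.differentiable two_ne_zero) hanti hS' ht
  linarith [hnn t ht]

theorem exists_lt_forall_gt_eq_zero (hv : ContDiff ℝ 2 v) (hm : 0 ≤ m) (hc : ∀ t, 0 ≤ c t)
    (hode : ∀ t, -deriv (deriv v) t = m * v t ^ 3 + c t * v t) {P : ℕ}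
    (hP : ChangesSignAtMost1D v univ P) {S : ℝ} (hzero : ∀ t, S < t → v t = 0) :
    ∃ T < S, ∀ t, T < t → v t = 0 := by
  have hS : v S = 0 := hv.continuous.eq_zero_of_forall_gt hzero
  have hS' : deriv v S = 0 := (hv.continuous_deriv one_le_two).eq_zero_of_forall_gt fun t ht =>
    ((Filter.eventuallyEq_of_mem (Ioi_mem_nhds ht) hzero).deriv_eq).trans (deriv_const t 0)
  obtain ⟨T, hTS, hsign⟩ := (hP.mono (subset_univ (Iio S))).exists_sign_eventually nonempty_Iio
  obtain ⟨a, hTa, haS⟩ := exists_between (mem_Iio.mp hTS)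
  have hIcc : ∀ t ∈ Icc a S, t = S ∨ (t < S ∧ T < t) := fun t ht =>
    ht.2.eq_or_lt.imp id fun h => ⟨h, hTa.trans_le ht.1⟩
  have hleft : ∀ t ∈ Icc a S, v t = 0 := by
    rcases hsign with hsign | hsign
    · refine fun t ht => eq_zero_on_Icc_of_nonneg hv hm hc hode (fun x hx => ?_) hS hS' ht
      rcases hIcc x hx with rfl | ⟨hxS, hTx⟩
      exacts [hS.ge, hsign x hxS hTx]
    · refine fun t ht => neg_eq_zero.mp (eq_zero_on_Icc_of_nonneg hv.neg hm hc
        (neg_deriv_deriv_neg hode) (fun x hx => ?_) (neg_eq_zero.mpr hS) ?_ ht)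
      · rcases hIcc x hx with rfl | ⟨hxS, hTx⟩
        exacts [(neg_eq_zero.mpr hS).ge, neg_nonneg.mpr (hsign x hxS hTx)]
      · simp [hS']
  refine ⟨a, haS, fun t ht => ?_⟩
  rcases le_or_gt t S with htS | htS
  exacts [hleft t ⟨ht.le, htS⟩, hzero t htS]

theorem eq_zero_of_neg_deriv_deriv_eq (hv : ContDiff ℝ 2 v) (hm : 0 < m) (hc : ∀ t, 0 ≤ c t)
    (hode : ∀ t, -deriv (deriv v) t = m * v t ^ 3 + c t * v t) {P : ℕ}
    (hP : ChangesSignAtMost1D v univ P) (t : ℝ) : v t = 0 := by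
  by_contra ht
  obtain ⟨T, hT⟩ := exists_eq_zero_on_Ici hv hm hc hode hP
  have hbdd : BddAbove (Function.support v) :=
    ⟨T, fun x hx => not_lt.mp fun hTx => hx (hT x hTx.le)⟩
  obtain ⟨T', hT'S, hT'⟩ := exists_lt_forall_gt_eq_zero hv hm.le hc hode hP
    (S := sSup (Function.support v)) fun x hx =>
      Function.notMem_support.mp (notMem_of_csSup_lt hx hbdd)
  obtain ⟨x, hx, hT'x⟩ := exists_lt_of_lt_csSup ⟨t, ht⟩ hT'S
  exact hx (hT' x hT'x)

end CubicODE

theorem liouville_1d_line_nonneg_general (N : ℕ) (μ : Fin N → ℝ) (hμ : ∀ j, 0 < μ j)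
    (P : Fin N → ℕ) (B : Fin N → Fin N → ℝ)
    (hBpos : ∀ i j, i ≠ j → 0 ≤ B i j) :
        ∀ u : Fin N → ℝ → ℝ,
          (∀ j, ContDiff ℝ 2 (u j)) →
          (∀ j t, |u j t| ≤ 1) →
          (∀ j, (∀ t, u j t = 0) ∨ ChangesSignAtMost1D (u j) Set.univ (P j)) →
          (∀ j t, -deriv (deriv (u j)) t =
              μ j * u j t ^ 3 + ∑ i ∈ Finset.univ.erase j, B i j * u i t ^ 2 * u j t) →
          ∀ j t, u j t = 0 := by
  intro u hu _ hsign hode j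
  rcases hsign j with hzero | hP
  · exact hzero
  refine eq_zero_of_neg_deriv_deriv_eq (hu j) (hμ j)
    (c := fun t => ∑ i ∈ Finset.univ.erase j, B i j * u i t ^ 2) (fun t => ?_) (fun t => ?_) hP
  · exact Finset.sum_nonneg fun i hi =>
      mul_nonneg (hBpos i j (Finset.ne_of_mem_erase hi)) (sq_nonneg _)
  · rw [hode j t, Finset.sum_mul]

theorem liouville_1d_line_nonneg (N : ℕ) (hN : 2 ≤ N) (μ : Fin N → ℝ) (hμ : ∀ j, 0 < μ j)
    (P : Fin N → ℕ) (B : Fin N → Fin N → ℝ)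
    (hBsymm : ∀ i j, i ≠ j → B i j = B j i)
    (hBpos : ∀ i j, i ≠ j → 0 ≤ B i j) :
        ∀ u : Fin N → ℝ → ℝ,
          (∀ j, ContDiff ℝ 2 (u j)) →
          (∀ j t, |u j t| ≤ 1) →
          (∀ j, (∀ t, u j t = 0) ∨ ChangesSignAtMost1D (u j) Set.univ (P j)) →
          (∀ j t, -deriv (deriv (u j)) t =
              μ j * u j t ^ 3 + ∑ i ∈ Finset.univ.erase j, B i j * u i t ^ 2 * u j t) →
          ∀ j t, u j t = 0 :=
  liouville_1d_line_nonneg_general N μ hμ P B hBpos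
end

section
/- Let N ≥ 2, let μ₁,…,μ_N > 0 be constants, let P₁,…,P_N ∈ ℕ, and suppose the real constants β_{ij} = β_{ji} (for i ≠ j) satisfy β_{ij} ≥ 0. If u₁,…,u_N : [0,∞) → ℝ are functions of class C² such that for every j one has u_j(0) = 0, |u_j(t)| ≤ 1 for all t ∈ [0,∞), u_j is either identically zero or changes sign at most P_j times, and −u_j'' = μ_j u_j³ + Σ_{i≠j} β_{ij} u_i² u_j holds pointwise on [0,∞), then u_j ≡ 0 for every j = 1,…,N. -/
/-!
Each equation is linear in `u j`: `-(u j)'' = V_j * u j` for the potential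
`V_j = μ_j (u j)² + ∑_{i ≠ j} β_{ij} (u i)²`, which satisfies `μ_j (u j)² ≤ V_j` and is bounded
since `|u i| ≤ 1`. Finitely many sign changes make `u j` eventually of one sign, say `u j ≥ 0`.
Then `(u j)'' ≤ -μ_j (u j)³ ≤ 0`: a nonnegative concave function is nondecreasing, and once it
reaches a value `c > 0` the bound `(u j)'' ≤ -μ_j c³` drives `(u j)'` below zero. So `u j`
vanishes near infinity, and since `V_j` is bounded, an energy estimate for the linear equation
propagates this back to all of `[0, ∞)`.
-/

open scoped BigOperators

open Set Filter Topology

lemma SignChangeWitness1D.of_seq {u : ℝ → ℝ} {I : Set ℝ} {f : ℕ → ℝ} (hI : ∀ n, f n ∈ I)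
    (hf : StrictMono f) (hsign : ∀ n, u (f n) * u (f (n + 1)) < 0) (k : ℕ) :
    SignChangeWitness1D u I k :=
  ⟨fun i => f i, fun i => hI i, hf.comp Fin.val_strictMono, fun i => hsign i⟩

lemma ChangesSignAtMost1D.exists_nonneg_or_nonpos {u : ℝ → ℝ} {a : ℝ} {P : ℕ}
    (h : ChangesSignAtMost1D u (Ici a) P) :
    ∃ T, a ≤ T ∧ ((∀ t ∈ Ioi T, 0 ≤ u t) ∨ ∀ t ∈ Ioi T, u t ≤ 0) := by
  by_contra! hmixed
  have hnext : ∀ x : {x // a ≤ x ∧ u x ≠ 0}, ∃ y : {x // a ≤ x ∧ u x ≠ 0},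
      x.1 < y.1 ∧ u x * u y < 0 := by
    rintro ⟨x, hax, hux⟩
    rcases hux.lt_or_gt with hneg | hpos
    · obtain ⟨y, hxy, huy⟩ := (hmixed x hax).2
      exact ⟨⟨y, hax.trans hxy.le, huy.ne'⟩, hxy, mul_neg_of_neg_of_pos hneg huy⟩
    · obtain ⟨y, hxy, huy⟩ := (hmixed x hax).1
      exact ⟨⟨y, hax.trans hxy.le, huy.ne⟩, hxy, mul_neg_of_pos_of_neg hpos huy⟩
  choose next hnext_gt hnext_sign using hnext
  obtain ⟨x₀, hax₀, hux₀⟩ := (hmixed a le_rfl).2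
  let f : ℕ → {x // a ≤ x ∧ u x ≠ 0} := fun n => next^[n] ⟨x₀, hax₀.le, hux₀.ne'⟩
  have hf_succ : ∀ n, f (n + 1) = next (f n) := fun n => Function.iterate_succ_apply' _ _ _
  refine h (.of_seq (f := fun n => (f n).1) (fun n => (f n).2.1)
    (strictMono_nat_of_lt_succ fun n => ?_) (fun n => ?_) _)
  · rw [hf_succ]; exact hnext_gt _
  · rw [hf_succ]; exact hnext_sign _

lemma exists_neg_of_hasDerivAt_le {f f' : ℝ → ℝ} {s c : ℝ} (hc : c < 0)
    (hf : ∀ x ∈ Ici s, HasDerivAt f (f' x) x) (hf' : ∀ x ∈ Ici s, f' x ≤ c) :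
    ∃ x ∈ Ici s, f x < 0 := by
  set y := s + (|f s| + 1) / -c
  have hsy : s ≤ y := le_add_of_nonneg_right (div_nonneg (by positivity) (by linarith))
  have hmvt : f y - f s ≤ c * (y - s) :=
    (convex_Ici s).image_sub_le_mul_sub_of_deriv_le
      (fun x hx => (hf x hx).continuousAt.continuousWithinAt)
      (fun x hx => (hf x (interior_subset hx)).differentiableAt.differentiableWithinAt)
      (fun x hx => (hf x (interior_subset hx)).deriv ▸ hf' x (interior_subset hx))
      s self_mem_Ici y hsy hsy
  have hdrop : c * (y - s) = -(|f s| + 1) := by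
    have := hc.ne
    simp only [y, add_sub_cancel_left]
    field_simp
  refine ⟨y, hsy, ?_⟩
  linarith [le_abs_self (f s)]

lemma eq_zero_of_nonneg_of_hasDerivAt {u v g : ℝ → ℝ} {μ T : ℝ} (hμ : 0 < μ)
    (hu : ∀ t ∈ Ioi T, HasDerivAt u (v t) t) (hv : ∀ t ∈ Ioi T, HasDerivAt v (-(g t * u t)) t)
    (hg : ∀ t ∈ Ioi T, μ * u t ^ 2 ≤ g t) (hu₀ : ∀ t ∈ Ioi T, 0 ≤ u t) :
    ∀ t ∈ Ioi T, u t = 0 := by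
  have hv_le : ∀ t ∈ Ioi T, -(g t * u t) ≤ -(μ * u t ^ 3) := fun t ht => by
    nlinarith [mul_le_mul_of_nonneg_right (hg t ht) (hu₀ t ht)]
  have hv_anti : AntitoneOn v (Ioi T) :=
    antitoneOn_of_hasDerivWithinAt_nonpos (convex_Ioi T)
      (fun t ht => (hv t ht).continuousAt.continuousWithinAt)
      (fun t ht => (hv t (interior_subset ht)).hasDerivWithinAt)
      (fun t ht => (hv_le t (interior_subset ht)).trans
        (neg_nonpos.2 (by have := hu₀ t (interior_subset ht); positivity)))
  have hIci : ∀ s ∈ Ioi T, Ici s ⊆ Ioi T := fun s hs => Ici_subset_Ioi.2 hs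
  -- a nonnegative concave function cannot decrease
  have hv_nonneg : ∀ s ∈ Ioi T, 0 ≤ v s := by
    intro s hs
    by_contra! hneg
    obtain ⟨x, hx, hux⟩ := exists_neg_of_hasDerivAt_le hneg
      (fun x hx => hu x (hIci s hs hx)) (fun x hx => hv_anti hs (hIci s hs hx) hx)
    exact (hu₀ x (hIci s hs hx)).not_gt hux
  have hu_mono : MonotoneOn u (Ioi T) :=
    monotoneOn_of_hasDerivWithinAt_nonneg (convex_Ioi T)
      (fun t ht => (hu t ht).continuousAt.continuousWithinAt)
      (fun t ht => (hu t (interior_subset ht)).hasDerivWithinAt)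
      (fun t ht => hv_nonneg t (interior_subset ht))
  intro t ht
  by_contra hne
  have hpos : 0 < u t := (hu₀ t ht).lt_of_ne' hne
  obtain ⟨x, hx, hvx⟩ := exists_neg_of_hasDerivAt_le (c := -(μ * u t ^ 3)) (by
      have := pow_pos hpos 3; nlinarith)
    (fun x hx => hv x (hIci t ht hx))
    (fun x hx => (hv_le x (hIci t ht hx)).trans (by
      have := hu_mono ht (hIci t ht hx) hx
      gcongr))
  exact (hv_nonneg x (hIci t ht hx)).not_gt hvx

lemma eq_zero_of_hasDerivAt_of_signed {u v g : ℝ → ℝ} {μ T : ℝ} (hμ : 0 < μ)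
    (hu : ∀ t ∈ Ioi T, HasDerivAt u (v t) t) (hv : ∀ t ∈ Ioi T, HasDerivAt v (-(g t * u t)) t)
    (hg : ∀ t ∈ Ioi T, μ * u t ^ 2 ≤ g t)
    (hsign : (∀ t ∈ Ioi T, 0 ≤ u t) ∨ ∀ t ∈ Ioi T, u t ≤ 0) :
    ∀ t ∈ Ioi T, u t = 0 := by
  rcases hsign with hnonneg | hnonpos
  · exact eq_zero_of_nonneg_of_hasDerivAt hμ hu hv hg hnonneg
  · intro t ht
    have := eq_zero_of_nonneg_of_hasDerivAt (u := -u) (v := -v) (g := g) hμ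
      (fun t ht => (hu t ht).neg)
      (fun t ht => by simpa only [Pi.neg_apply, mul_neg] using (hv t ht).neg)
      (fun t ht => by simpa only [Pi.neg_apply, neg_sq] using hg t ht)
      (fun t ht => neg_nonneg.mpr (hnonpos t ht)) t ht
    simpa using this

lemma eq_zero_of_hasDerivAt_of_eq_zero_right {u v g : ℝ → ℝ} {a b K : ℝ}
    (hu_cont : ContinuousOn u (Icc a b)) (hv_cont : ContinuousOn v (Icc a b))
    (hu : ∀ t ∈ Ioo a b, HasDerivAt u (v t) t) (hv : ∀ t ∈ Ioo a b, HasDerivAt v (-(g t * u t)) t)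
    (hg : ∀ t ∈ Ioo a b, |g t| ≤ K) (hub : u b = 0) (hvb : v b = 0) :
    ∀ t ∈ Icc a b, u t = 0 := by
  set E : ℝ → ℝ := fun t => (u t ^ 2 + v t ^ 2) * Real.exp ((1 + K) * t)
  have hE_deriv : ∀ t ∈ Ioo a b, HasDerivAt E
      ((2 * u t * v t * (1 - g t) + (1 + K) * (u t ^ 2 + v t ^ 2)) * Real.exp ((1 + K) * t)) t := by
    intro t ht
    have hexp : HasDerivAt (fun t => Real.exp ((1 + K) * t))
        (Real.exp ((1 + K) * t) * (1 + K)) t := by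
      simpa using ((hasDerivAt_id t).const_mul (1 + K)).exp
    exact (((hu t ht).pow 2).add ((hv t ht).pow 2)).mul hexp |>.congr_deriv
      (by simp only [Pi.add_apply, Pi.pow_apply]; ring)
  -- `|2 u v (1 - g)| ≤ (1 + K) (u² + v²)` since `|2 u v| ≤ u² + v²` and `|1 - g| ≤ 1 + K`
  have hE_mono : MonotoneOn E (Icc a b) :=
    monotoneOn_of_hasDerivWithinAt_nonneg (convex_Icc a b)
      ((hu_cont.pow 2).add (hv_cont.pow 2) |>.mul (by fun_prop))
      (by rw [interior_Icc]; exact fun t ht => (hE_deriv t ht).hasDerivWithinAt)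
      (by
        rw [interior_Icc]
        intro t ht
        obtain ⟨hgl, hgu⟩ := abs_le.mp (hg t ht)
        have : 0 ≤ 2 * u t * v t * (1 - g t) + (1 + K) * (u t ^ 2 + v t ^ 2) := by
          nlinarith [mul_nonneg (by linarith : 0 ≤ 2 + K - g t) (sq_nonneg (u t + v t)),
            mul_nonneg (by linarith : 0 ≤ K + g t) (sq_nonneg (u t - v t))]
        positivity)
  intro t ht
  have hEt : E t ≤ 0 := by
    simpa [E, hub, hvb] using hE_mono ht (right_mem_Icc.2 (ht.1.trans ht.2)) ht.2
  have hsq : u t ^ 2 + v t ^ 2 ≤ 0 := nonpos_of_mul_nonpos_left hEt (Real.exp_pos _)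
  nlinarith [sq_nonneg (u t), sq_nonneg (v t)]

lemma ContDiffOn.hasDerivAt_derivWithin {f : ℝ → ℝ} {s : Set ℝ} {n : WithTop ℕ∞}
    (hf : ContDiffOn ℝ n f s) (hn : n ≠ 0) {x : ℝ} (hx : s ∈ 𝓝 x) :
    HasDerivAt f (derivWithin f s x) x := by
  rw [derivWithin_of_mem_nhds hx]
  exact ((hf.contDiffAt hx).differentiableAt hn).hasDerivAt

section Potential

open Finset

variable {N : ℕ} (μ : Fin N → ℝ) (B : Fin N → Fin N → ℝ) (u : Fin N → ℝ → ℝ) (j : Fin N)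

def systemPotential (t : ℝ) : ℝ :=
  μ j * u j t ^ 2 + ∑ i ∈ univ.erase j, B i j * u i t ^ 2

lemma systemPotential_mul (t : ℝ) :
    systemPotential μ B u j t * u j t =
      μ j * u j t ^ 3 + ∑ i ∈ univ.erase j, B i j * u i t ^ 2 * u j t := by
  simp only [systemPotential, add_mul, sum_mul]
  ring

variable {μ B}

lemma mul_sq_le_systemPotential (hB : ∀ i j, i ≠ j → 0 ≤ B i j) (t : ℝ) :
    μ j * u j t ^ 2 ≤ systemPotential μ B u j t :=
  le_add_of_nonneg_right <| sum_nonneg fun i hi =>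
    mul_nonneg (hB i j (ne_of_mem_erase hi)) (sq_nonneg _)

lemma abs_systemPotential_le (hμ : 0 ≤ μ j) (hB : ∀ i j, i ≠ j → 0 ≤ B i j) {t : ℝ}
    (hu : ∀ i, |u i t| ≤ 1) :
    |systemPotential μ B u j t| ≤ μ j + ∑ i ∈ univ.erase j, B i j := by
  have hsq : ∀ i, u i t ^ 2 ≤ 1 := fun i => (sq_le_one_iff_abs_le_one _).2 (hu i)
  rw [abs_of_nonneg ((by positivity : 0 ≤ μ j * u j t ^ 2).trans
    (mul_sq_le_systemPotential u j hB t))]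
  refine add_le_add (mul_le_of_le_one_right hμ (hsq j)) (sum_le_sum fun i hi => ?_)
  exact mul_le_of_le_one_right (hB i j (ne_of_mem_erase hi)) (hsq i)

end Potential

theorem liouville_1d_halfline_nonneg_general (N : ℕ) (μ : Fin N → ℝ) (hμ : ∀ j, 0 < μ j)
    (P : Fin N → ℕ) (B : Fin N → Fin N → ℝ)
    (hBpos : ∀ i j, i ≠ j → 0 ≤ B i j) :
        ∀ u : Fin N → ℝ → ℝ,
          (∀ j, ContDiffOn ℝ 2 (u j) (Set.Ici 0)) →
          (∀ j, u j 0 = 0) →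
          (∀ j, ∀ t ∈ Set.Ici (0 : ℝ), |u j t| ≤ 1) →
          (∀ j, (∀ t ∈ Set.Ici (0 : ℝ), u j t = 0) ∨
            ChangesSignAtMost1D (u j) (Set.Ici 0) (P j)) →
          (∀ j, ∀ t ∈ Set.Ici (0 : ℝ),
            -derivWithin (derivWithin (u j) (Set.Ici 0)) (Set.Ici 0) t =
              μ j * u j t ^ 3 + ∑ i ∈ Finset.univ.erase j, B i j * u i t ^ 2 * u j t) →
          ∀ j, ∀ t ∈ Set.Ici (0 : ℝ), u j t = 0 := by
  intro u hu _ hbd hsgn heq j t ht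
  set v := derivWithin (u j) (Ici 0)
  have hv : ContDiffOn ℝ 1 v (Ici 0) := (hu j).derivWithin (uniqueDiffOn_Ici 0) (by norm_num)
  have hu' : ∀ s ∈ Ioi (0 : ℝ), HasDerivAt (u j) (v s) s := fun s hs =>
    (hu j).hasDerivAt_derivWithin two_ne_zero (Ici_mem_nhds hs)
  have hv' : ∀ s ∈ Ioi (0 : ℝ), HasDerivAt v (-(systemPotential μ B u j s * u j s)) s := by
    intro s hs
    rw [systemPotential_mul, ← heq j s (Ioi_subset_Ici_self hs), neg_neg]
    exact hv.hasDerivAt_derivWithin one_ne_zero (Ici_mem_nhds hs)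
  obtain ⟨T, hT0, hT⟩ : ∃ T, 0 ≤ T ∧ ∀ s ∈ Ioi T, u j s = 0 := by
    rcases hsgn j with hzero | hchanges
    · exact ⟨0, le_rfl, fun s hs => hzero s (Ioi_subset_Ici_self hs)⟩
    obtain ⟨T, hT0, hsign⟩ := hchanges.exists_nonneg_or_nonpos
    have hsub : Ioi T ⊆ Ioi 0 := Ioi_subset_Ioi hT0
    exact ⟨T, hT0, eq_zero_of_hasDerivAt_of_signed (hμ j) (fun s hs => hu' s (hsub hs))
      (fun s hs => hv' s (hsub hs)) (fun s _ => mul_sq_le_systemPotential u j hBpos s) hsign⟩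
  set S := max T t + 1
  have hTS : T < S := by simp only [S]; linarith [le_max_left T t]
  have huS : u j =ᶠ[𝓝 S] fun _ => 0 := eventually_of_mem (Ioi_mem_nhds hTS) hT
  have hvS : v S = 0 :=
    (hu' S (hT0.trans_lt hTS)).unique ((hasDerivAt_const S 0).congr_of_eventuallyEq huS)
  exact eq_zero_of_hasDerivAt_of_eq_zero_right (a := 0) (b := S)
    ((hu j).continuousOn.mono Icc_subset_Ici_self) (hv.continuousOn.mono Icc_subset_Ici_self)
    (fun s hs => hu' s hs.1) (fun s hs => hv' s hs.1)
    (fun s hs => abs_systemPotential_le u j (hμ j).le hBpos fun i => hbd i s (Ioi_subset_Ici_self hs.1))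
    huS.eq_of_nhds hvS t ⟨ht, by simp only [S]; linarith [le_max_right T t]⟩

theorem liouville_1d_halfline_nonneg (N : ℕ) (hN : 2 ≤ N) (μ : Fin N → ℝ) (hμ : ∀ j, 0 < μ j)
    (P : Fin N → ℕ) (B : Fin N → Fin N → ℝ)
    (hBsymm : ∀ i j, i ≠ j → B i j = B j i)
    (hBpos : ∀ i j, i ≠ j → 0 ≤ B i j) :
        ∀ u : Fin N → ℝ → ℝ,
          (∀ j, ContDiffOn ℝ 2 (u j) (Set.Ici 0)) →
          (∀ j, u j 0 = 0) →
          (∀ j, ∀ t ∈ Set.Ici (0 : ℝ), |u j t| ≤ 1) →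
          (∀ j, (∀ t ∈ Set.Ici (0 : ℝ), u j t = 0) ∨
            ChangesSignAtMost1D (u j) (Set.Ici 0) (P j)) →
          (∀ j, ∀ t ∈ Set.Ici (0 : ℝ),
            -derivWithin (derivWithin (u j) (Set.Ici 0)) (Set.Ici 0) t =
              μ j * u j t ^ 3 + ∑ i ∈ Finset.univ.erase j, B i j * u i t ^ 2 * u j t) →
          ∀ j, ∀ t ∈ Set.Ici (0 : ℝ), u j t = 0 :=
  liouville_1d_halfline_nonneg_general N μ hμ P B hBpos
end
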